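/- arXiv:2404.02495 — 5 statements merged into one kernel-verified Lean document; each statement's English description precedes it below -/
import Mathlib

section
/- Let P = conv(u_0, u_1, u_2, u_3) ⊆ ℝ^3 be a full-dimensional lattice simplex with lattice length l(P) ≥ 2. Then P can be covered by finitely many dilated lattice simplices of the form sQ with integer s ≥ 2; that is, there exist finitely many lattice simplices Q_1, …, Q_m ⊆ ℝ^3, integers s_1, …, s_m ≥ 2, and lattice vectors v_1, …, v_m ∈ ℤ^3 such that P = ⋃_{i=1}^m (v_i + s_i·Q_i). -/
open Finset Pointwise

noncomputable section

/-- The real point corresponding to a lattice point. -/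
def toR {n : ℕ} (v : Fin n → ℤ) : Fin n → ℝ := fun x => (v x : ℝ)

/-- The lattice simplex (as a subset of `ℝ^n`) with the given lattice vertices. -/
def lsimplex {n m : ℕ} (u : Fin m → Fin n → ℤ) : Set (Fin n → ℝ) :=
  convexHull ℝ (Set.range fun i => toR (u i))

/-- The lattice length `l_{ij}` of the edge `u_i u_j`:
the gcd of the coordinates of `u_j - u_i`. -/
def latLen {n m : ℕ} (u : Fin m → Fin n → ℤ) (i j : Fin m) : ℕ :=
  Finset.univ.gcd fun x => (u j x - u i x).natAbs

/-- `r_{ij,k}`: the least nonnegative residue of `l_{ij}` modulo `k`. -/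
def rmod {n m : ℕ} (u : Fin m → Fin n → ℤ) (i j : Fin m) (k : ℕ) : ℕ :=
  latLen u i j % k

/-- The vertices of the `k`-dilation `P_{i,k}`: the vertex `u_i` together with, for `j ≠ i`,
the points `((l_{ij} - r_{ij,k})/l_{ij})·u_j + (r_{ij,k}/l_{ij})·u_i`. -/
def dilVert {n m : ℕ} (u : Fin m → Fin n → ℤ) (i : Fin m) (k : ℕ) (j : Fin m) :
    Fin n → ℝ :=
  if j = i then toR (u i)
  else
    ((((latLen u i j : ℝ) - (rmod u i j k : ℝ)) / (latLen u i j : ℝ)) • toR (u j))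
      + (((rmod u i j k : ℝ) / (latLen u i j : ℝ)) • toR (u i))

/-- The `k`-dilation `P_{i,k}`. -/
def dil {n m : ℕ} (u : Fin m → Fin n → ℤ) (i : Fin m) (k : ℕ) : Set (Fin n → ℝ) :=
  convexHull ℝ (Set.range (dilVert u i k))

/-- The primitive edge vector `ũ_{ij} = (u_j - u_i)/l_{ij}`. -/
def primVec {n m : ℕ} (u : Fin m → Fin n → ℤ) (i j : Fin m) : Fin n → ℝ :=
  (latLen u i j : ℝ)⁻¹ • (toR (u j) - toR (u i))

/-- The translated `k`-dilation `P_{i,k,t} = P_{i,k} + Σ_{j ≠ i} t_j ũ_{ij}`. -/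
def dilT {n m : ℕ} (u : Fin m → Fin n → ℤ) (i : Fin m) (k : ℕ) (t : Fin m → ℕ) :
    Set (Fin n → ℝ) :=
  (fun y => y + ∑ j ∈ Finset.univ.erase i, (t j : ℝ) • primVec u i j) '' dil u i k

namespace Covering

variable (u : Fin 4 → Fin 3 → ℤ)

/-- The primitive integer edge vector. -/
def pv (i j : Fin 4) : Fin 3 → ℤ := fun x => (u j x - u i x) / (latLen u i j : ℤ)

lemma latLen_dvd (i j : Fin 4) (x : Fin 3) : (latLen u i j : ℤ) ∣ (u j x - u i x) :=
  Int.dvd_natAbs.mp (Int.natCast_dvd_natCast.mpr (Finset.gcd_dvd (Finset.mem_univ x)))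

lemma pv_spec (i j : Fin 4) (x : Fin 3) :
    (latLen u i j : ℤ) * pv u i j x = u j x - u i x :=
  Int.mul_ediv_cancel' (latLen_dvd u i j x)

lemma pv_real (i j : Fin 4) :
    (latLen u i j : ℝ) • toR (pv u i j) = toR (u j) - toR (u i) := by
  funext x
  have := pv_spec u i j x
  simp only [Pi.smul_apply, Pi.sub_apply, smul_eq_mul, toR]
  exact_mod_cast congrArg (Int.cast : ℤ → ℝ) this

/-- The chosen dilation factor at corner `i`. -/
def KK (i : Fin 4) : ℕ :=
  if (∀ j ∈ Finset.univ.erase i, Odd (latLen u i j)) ∧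
      2 ≤ ((Finset.univ.erase i).filter fun j => latLen u i j = 3).card then 3 else 2

lemma two_le_KK (i : Fin 4) : 2 ≤ KK u i := by
  unfold KK; split_ifs <;> norm_num

/-- Vertices of the corner piece at corner `i`, divided by the dilation factor. -/
def Qv (i j : Fin 4) : Fin 3 → ℤ :=
  if j = i then 0 else ((latLen u i j / KK u i : ℕ) : ℤ) • pv u i j

/-- The lattice leg length of the piece at corner `i` in direction `j`. -/
def mq (i j : Fin 4) : ℕ := KK u i * (latLen u i j / KK u i)

def tR (L k : ℕ) : ℝ := ((L % k : ℕ) : ℝ) / ((k * (L / k) : ℕ) : ℝ)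

lemma tR_nonneg (L k : ℕ) : 0 ≤ tR L k := by
  unfold tR; positivity

lemma tR_two_half {L : ℕ} (h : 2 ≤ L) : tR L 2 ≤ 1/2 := by
  rcases Nat.even_or_odd L with he | ho
  · have : L % 2 = 0 := Nat.even_iff.mp he
    simp [tR, this]
  · obtain ⟨c, hc⟩ := ho
    have hc1 : 1 ≤ c := by omega
    have h1 : L % 2 = 1 := Nat.odd_iff.mp ⟨c, hc⟩
    have h2' : 2 * (L / 2) = 2 * c := by omega
    rw [tR, h1, h2']
    have : (2:ℝ) ≤ (2 * c : ℕ) := by exact_mod_cast by omega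
    rw [div_le_div_iff₀ (by linarith) (by norm_num)]
    push_cast at this ⊢
    linarith

lemma tR_two_quarter {L : ℕ} (h : 2 ≤ L) (h3 : L ≠ 3) : tR L 2 ≤ 1/4 := by
  rcases Nat.even_or_odd L with he | ho
  · have : L % 2 = 0 := Nat.even_iff.mp he
    simp [tR, this]
  · obtain ⟨c, hc⟩ := ho
    have hc1 : 2 ≤ c := by omega
    have h1 : L % 2 = 1 := Nat.odd_iff.mp ⟨c, hc⟩
    have h2' : 2 * (L / 2) = 2 * c := by omega
    rw [tR, h1, h2']
    have : (4:ℝ) ≤ (2 * c : ℕ) := by exact_mod_cast by omega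
    rw [div_le_div_iff₀ (by linarith) (by norm_num)]
    push_cast at this ⊢
    linarith

lemma tR_three_le_one {L : ℕ} (h : 3 ≤ L) : tR L 3 ≤ 1 := by
  have h2 : 3 ≤ 3 * (L / 3) := by omega
  rw [tR, div_le_one (by exact_mod_cast by omega : (0:ℝ) < ((3 * (L/3) : ℕ) : ℝ))]
  exact_mod_cast by omega

lemma tR_three_eq_zero : tR 3 3 = 0 := by norm_num [tR]

lemma card_erase_fin4 (i : Fin 4) : (Finset.univ.erase i).card = 3 := by
  rw [Finset.card_erase_of_mem (Finset.mem_univ i)]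
  simp

lemma KK_le (i : Fin 4) (h2 : ∀ j ∈ Finset.univ.erase i, 2 ≤ latLen u i j) :
    ∀ j ∈ Finset.univ.erase i, KK u i ≤ latLen u i j := by
  intro j hj
  unfold KK
  split_ifs with h
  · obtain ⟨c, hc⟩ := h.1 j hj
    have := h2 j hj
    omega
  · exact h2 j hj

lemma parity_sum (i : Fin 4) (h2 : ∀ j ∈ Finset.univ.erase i, 2 ≤ latLen u i j) :
    ∑ j ∈ Finset.univ.erase i, tR (latLen u i j) (KK u i) ≤ 1 := by
  classical
  set E := Finset.univ.erase i with hE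
  have hcardE : E.card = 3 := card_erase_fin4 i
  unfold KK
  split_ifs with h
  · obtain ⟨hodd, hcard⟩ := h
    set B := E.filter fun j => latLen u i j = 3 with hB
    have hsplit := Finset.sum_filter_add_sum_filter_not E (fun j => latLen u i j = 3)
      (fun j => tR (latLen u i j) 3)
    have hBzero : ∑ j ∈ B, tR (latLen u i j) 3 = 0 := by
      apply Finset.sum_eq_zero
      intro j hj
      rw [(Finset.mem_filter.mp hj).2]
      exact tR_three_eq_zero
    have hCbound : ∑ j ∈ E.filter (fun j => ¬ latLen u i j = 3), tR (latLen u i j) 3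
        ≤ (E.filter (fun j => ¬ latLen u i j = 3)).card • (1:ℝ) := by
      apply Finset.sum_le_card_nsmul
      intro j hj
      have hjE := Finset.mem_filter.mp hj
      have h3 : 3 ≤ latLen u i j := by
        obtain ⟨c, hc⟩ := hodd j hjE.1
        have := h2 j hjE.1
        omega
      exact tR_three_le_one h3
    have hcards : B.card + (E.filter (fun j => ¬ latLen u i j = 3)).card = 3 := by
      rw [hB, Finset.card_filter_add_card_filter_not]
      exact hcardE
    have hCcard : (E.filter (fun j => ¬ latLen u i j = 3)).card ≤ 1 := by omega
    calc ∑ j ∈ E, tR (latLen u i j) 3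
        = ∑ j ∈ B, tR (latLen u i j) 3
          + ∑ j ∈ E.filter (fun j => ¬ latLen u i j = 3), tR (latLen u i j) 3 := hsplit.symm
      _ ≤ 0 + (E.filter (fun j => ¬ latLen u i j = 3)).card • (1:ℝ) := by
          rw [hBzero]; exact add_le_add le_rfl hCbound
      _ ≤ 1 := by
          rw [zero_add, nsmul_eq_mul, mul_one]
          exact_mod_cast hCcard
  · rw [not_and_or] at h
    rcases h with h | h
    · push_neg at h
      obtain ⟨j₀, hj₀E, hj₀⟩ := h
      rw [Nat.not_odd_iff_even] at hj₀
      rw [← Finset.add_sum_erase E _ hj₀E]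
      have hz : tR (latLen u i j₀) 2 = 0 := by
        have : latLen u i j₀ % 2 = 0 := Nat.even_iff.mp hj₀
        simp [tR, this]
      have hrest : ∑ j ∈ E.erase j₀, tR (latLen u i j) 2
          ≤ (E.erase j₀).card • ((1:ℝ)/2) := by
        apply Finset.sum_le_card_nsmul
        intro j hj
        exact tR_two_half (h2 j (Finset.mem_of_mem_erase hj))
      have hc2 : (E.erase j₀).card = 2 := by
        rw [Finset.card_erase_of_mem hj₀E, hcardE]
      rw [hz, zero_add]
      calc ∑ j ∈ E.erase j₀, tR (latLen u i j) 2 ≤ (E.erase j₀).card • ((1:ℝ)/2) := hrest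
        _ = 1 := by rw [hc2]; norm_num
    · push_neg at h
      set B := E.filter fun j => latLen u i j = 3 with hB
      have hcardB : B.card ≤ 1 := by omega
      have hsplit := Finset.sum_filter_add_sum_filter_not E (fun j => latLen u i j = 3)
        (fun j => tR (latLen u i j) 2)
      have hBbound : ∑ j ∈ B, tR (latLen u i j) 2 ≤ B.card • ((1:ℝ)/2) := by
        apply Finset.sum_le_card_nsmul
        intro j hj
        exact tR_two_half (h2 j (Finset.mem_filter.mp hj).1)
      have hCbound : ∑ j ∈ E.filter (fun j => ¬ latLen u i j = 3), tR (latLen u i j) 2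
          ≤ (E.filter (fun j => ¬ latLen u i j = 3)).card • ((1:ℝ)/4) := by
        apply Finset.sum_le_card_nsmul
        intro j hj
        have hjE := Finset.mem_filter.mp hj
        exact tR_two_quarter (h2 j hjE.1) hjE.2
      have hcards : B.card + (E.filter (fun j => ¬ latLen u i j = 3)).card = 3 := by
        rw [hB, Finset.card_filter_add_card_filter_not]
        exact hcardE
      have hbc : B.card = 0 ∨ B.card = 1 := by omega
      calc ∑ j ∈ E, tR (latLen u i j) 2
          = ∑ j ∈ B, tR (latLen u i j) 2
            + ∑ j ∈ E.filter (fun j => ¬ latLen u i j = 3), tR (latLen u i j) 2 := hsplit.symm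
        _ ≤ B.card • ((1:ℝ)/2) + (E.filter (fun j => ¬ latLen u i j = 3)).card • ((1:ℝ)/4) :=
            add_le_add hBbound hCbound
        _ ≤ 1 := by
            rcases hbc with hb | hb <;>
              · have h3 : (E.filter (fun j => ¬ latLen u i j = 3)).card = 3 - B.card := by omega
                rw [hb] at h3 ⊢
                rw [h3, nsmul_eq_mul, nsmul_eq_mul]
                norm_num

variable {u}

lemma mq_le (i j : Fin 4) : mq u i j ≤ latLen u i j := Nat.mul_div_le _ _

lemma mq_pos (i j : Fin 4) (h : KK u i ≤ latLen u i j) : 0 < mq u i j := by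
  have h0 : 0 < KK u i := by have := two_le_KK u i; omega
  have : 1 ≤ latLen u i j / KK u i := (Nat.one_le_div_iff h0).mpr h
  have := Nat.mul_le_mul_left (KK u i) this
  unfold mq
  omega

lemma mq_add_mod (i j : Fin 4) : mq u i j + latLen u i j % KK u i = latLen u i j :=
  Nat.div_add_mod _ _

lemma KQv (i j : Fin 4) (h : j ≠ i) :
    (KK u i : ℝ) • toR (Qv u i j) = ((mq u i j : ℕ) : ℝ) • toR (pv u i j) := by
  funext x
  simp only [Qv, if_neg h, toR, mq, Pi.smul_apply, smul_eq_mul, Nat.cast_mul,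
    Int.cast_mul, Int.cast_natCast]
  ring

lemma K_smul_Qv (i j : Fin 4) (h : j ≠ i) (hL : 0 < latLen u i j) :
    (KK u i : ℝ) • toR (Qv u i j) =
      ((mq u i j : ℝ) / (latLen u i j : ℝ)) • (toR (u j) - toR (u i)) := by
  have hL' : (latLen u i j : ℝ) ≠ 0 := by exact_mod_cast hL.ne'
  rw [KQv i j h, ← pv_real u i j, smul_smul, div_mul_cancel₀ _ hL']


lemma toR_zero : toR (0 : Fin 3 → ℤ) = 0 := by
  funext x; simp [toR]

lemma Qv_self (i : Fin 4) : Qv u i i = 0 := if_pos rfl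

lemma toR_Qv (i j : Fin 4) (h : j ≠ i) :
    toR (Qv u i j) = ((latLen u i j / KK u i : ℕ) : ℝ) • toR (pv u i j) := by
  funext x
  simp only [Qv, if_neg h, toR, Pi.smul_apply, smul_eq_mul, Int.cast_mul, Int.cast_natCast]

lemma toR_pv_eq (i j : Fin 4) (hL : 0 < latLen u i j) :
    toR (pv u i j) = (latLen u i j : ℝ)⁻¹ • (toR (u j) - toR (u i)) := by
  have hL' : (latLen u i j : ℝ) ≠ 0 := by exact_mod_cast hL.ne'
  rw [← pv_real u i j, smul_smul, inv_mul_cancel₀ hL', one_smul]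

/-- The real vertices of the piece at corner `i`. -/
def Vx (u : Fin 4 → Fin 3 → ℤ) (i j : Fin 4) : Fin 3 → ℝ :=
  toR (u i) + (KK u i : ℝ) • toR (Qv u i j)

lemma Vx_self (i : Fin 4) : Vx u i i = toR (u i) := by
  rw [Vx, Qv_self, toR_zero, smul_zero, add_zero]

lemma Vx_mem (i j : Fin 4) (h2 : ∀ j ∈ Finset.univ.erase i, 2 ≤ latLen u i j) :
    Vx u i j ∈ lsimplex u := by
  by_cases h : j = i
  · subst h
    rw [Vx_self]
    exact subset_convexHull ℝ _ (Set.mem_range_self j)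
  · have hL : 2 ≤ latLen u i j :=
      h2 j (Finset.mem_erase.mpr ⟨h, Finset.mem_univ j⟩)
    have hL0 : (0:ℝ) < (latLen u i j : ℝ) := by exact_mod_cast by omega
    set c : ℝ := (mq u i j : ℝ) / (latLen u i j : ℝ) with hc
    have hc0 : 0 ≤ c := by positivity
    have hc1 : c ≤ 1 := by
      rw [hc, div_le_one hL0]
      exact_mod_cast mq_le i j
    have hV : Vx u i j = (1 - c) • toR (u i) + c • toR (u j) := by
      rw [Vx, K_smul_Qv i j h (by omega), ← hc]
      module
    rw [hV]
    exact (convex_convexHull ℝ _) (subset_convexHull ℝ _ (Set.mem_range_self i))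
      (subset_convexHull ℝ _ (Set.mem_range_self j)) (by linarith) hc0 (by ring)

lemma image_piece (a : Fin 4) :
    (fun y => toR (u a) + (KK u a : ℝ) • y) '' lsimplex (Qv u a) =
      convexHull ℝ (Set.range (Vx u a)) := by
  let φ : (Fin 3 → ℝ) →ᵃ[ℝ] (Fin 3 → ℝ) :=
    { toFun := fun y => toR (u a) + (KK u a : ℝ) • y
      linear := (KK u a : ℝ) • LinearMap.id
      map_vadd' := by
        intro p v
        simp only [vadd_eq_add, LinearMap.smul_apply, LinearMap.id_apply, smul_add]
        abel }
  have h1 : (fun y => toR (u a) + (KK u a : ℝ) • y) = ⇑φ := rfl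
  rw [h1, lsimplex, AffineMap.image_convexHull, ← Set.range_comp]
  rfl

lemma indep (hind : AffineIndependent ℝ fun i => toR (u i))
    (hlen : ∀ i j, i ≠ j → 2 ≤ latLen u i j) (a : Fin 4) :
    AffineIndependent ℝ fun j => toR (Qv u a j) := by
  classical
  rw [affineIndependent_iff_linearIndependent_vsub ℝ _ a]
  have base := (affineIndependent_iff_linearIndependent_vsub ℝ (fun j => toR (u j)) a).mp hind
  have h2 : ∀ j ∈ Finset.univ.erase a, 2 ≤ latLen u a j := fun j hj =>
    hlen a j (Ne.symm (Finset.mem_erase.mp hj).1)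
  have hKle := KK_le u a h2
  set c : {x // x ≠ a} → ℝ :=
    fun j => ((latLen u a j / KK u a : ℕ) : ℝ) / (latLen u a j : ℝ) with hcdef
  have hcpos : ∀ j : {x // x ≠ a}, c j ≠ 0 := by
    intro j
    have hj : (j : Fin 4) ∈ Finset.univ.erase a :=
      Finset.mem_erase.mpr ⟨j.2, Finset.mem_univ _⟩
    have hL2 : 2 ≤ latLen u a j := h2 j hj
    have hK : KK u a ≤ latLen u a j := hKle j hj
    have hKpos : 0 < KK u a := by have := two_le_KK u a; omega
    have h1 : 1 ≤ latLen u a j / KK u a := (Nat.one_le_div_iff hKpos).mpr hK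
    have hn : (0:ℝ) < ((latLen u a j / KK u a : ℕ) : ℝ) := by exact_mod_cast h1
    have hd : (0:ℝ) < (latLen u a j : ℝ) := by exact_mod_cast by omega
    exact ne_of_gt (div_pos hn hd)
  have hli := base.units_smul fun j => Units.mk0 (c j) (hcpos j)
  have heq : (fun j : {x // x ≠ a} => toR (Qv u a j) -ᵥ toR (Qv u a a)) =
      (fun j => Units.mk0 (c j) (hcpos j)) • (fun j : {x // x ≠ a} =>
          toR (u ↑j) -ᵥ toR (u a)) := by
    funext j
    have hj : (j : Fin 4) ∈ Finset.univ.erase a :=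
      Finset.mem_erase.mpr ⟨j.2, Finset.mem_univ _⟩
    have hL2 : 2 ≤ latLen u a j := h2 j hj
    rw [Pi.smul_apply', Qv_self, toR_zero, vsub_eq_sub, sub_zero, toR_Qv a j j.2,
      toR_pv_eq a j (by omega), vsub_eq_sub, Units.smul_def, Units.val_mk0, hcdef,
      smul_smul, ← div_eq_mul_inv]
  rw [heq]
  exact hli

end Covering

open Covering

/-- A full-dimensional lattice simplex in `ℝ³` with lattice length at least 2
can be covered by finitely many dilated lattice simplices `v + s·Q` with integer `s ≥ 2`. -/
theorem covering_dim3
    (u : Fin 4 → Fin 3 → ℤ)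
    (hind : AffineIndependent ℝ fun i => toR (u i))
    (hlen : ∀ i j, i ≠ j → 2 ≤ latLen u i j) :
    ∃ (m : ℕ) (Q : Fin m → Fin 4 → Fin 3 → ℤ) (s : Fin m → ℕ) (v : Fin m → Fin 3 → ℤ),
      (∀ a, AffineIndependent ℝ fun i => toR (Q a i)) ∧
      (∀ a, 2 ≤ s a) ∧
      lsimplex u = ⋃ a, (fun y => toR (v a) + (s a : ℝ) • y) '' lsimplex (Q a) := by
  
  classical
  refine ⟨4, fun a => Qv u a, fun a => KK u a, fun a => u a,
    fun a => indep hind hlen a, fun a => two_le_KK u a, ?_⟩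
  apply Set.Subset.antisymm
  · -- covering direction
    intro x hx
    rw [lsimplex, convexHull_range_eq_exists_affineCombination] at hx
    obtain ⟨sf, w0, hw0, hw1, hxeq⟩ := hx
    set w : Fin 4 → ℝ := Set.indicator ↑sf w0 with hw
    have hw1' : ∑ j, w j = 1 := by
      rw [hw, Finset.sum_indicator_subset _ (Finset.subset_univ sf)]
      exact hw1
    have hwnn : ∀ j, 0 ≤ w j := by
      intro j
      rw [hw]
      by_cases hj : j ∈ (sf : Set (Fin 4))
      · rw [Set.indicator_of_mem hj]; exact hw0 j hj
      · rw [Set.indicator_of_notMem hj]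
    have hxeq' : x = ∑ j, w j • toR (u j) := by
      rw [← hxeq, Finset.affineCombination_indicator_subset w0 _ (Finset.subset_univ sf)]
      rw [affineCombination_eq_linear_combination _ _ _ hw1']
    obtain ⟨i, -, hmax⟩ := Finset.exists_max_image Finset.univ w Finset.univ_nonempty
    set E := Finset.univ.erase i with hE
    have h2 : ∀ j ∈ E, 2 ≤ latLen u i j := fun j hj =>
      hlen i j (Ne.symm (Finset.mem_erase.mp hj).1)
    have hKle := KK_le u i h2
    have hwi : 0 ≤ w i := hwnn i
    have hEsum : ∑ j ∈ E, w j = 1 - w i := by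
      have h := Finset.add_sum_erase Finset.univ w (Finset.mem_univ i)
      rw [hw1'] at h
      rw [hE]
      linarith
    set f : Fin 4 → ℝ := fun j => (latLen u i j : ℝ) / (mq u i j : ℝ) with hf
    have hfnn : ∀ j, 0 ≤ f j := fun j => by
      rw [hf]
      positivity
    have hfsplit : ∀ j ∈ E, f j = 1 + tR (latLen u i j) (KK u i) := by
      intro j hj
      have hKj := hKle j hj
      have hm := mq_pos i j hKj
      have hmr : (0:ℝ) < (mq u i j : ℝ) := by exact_mod_cast hm
      have hLm := mq_add_mod (u := u) i j
      have htR : tR (latLen u i j) (KK u i)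
          = ((latLen u i j % KK u i : ℕ) : ℝ) / ((mq u i j : ℕ) : ℝ) := rfl
      have hLr : (latLen u i j : ℝ)
          = (mq u i j : ℝ) + ((latLen u i j % KK u i : ℕ) : ℝ) := by
        exact_mod_cast congrArg (Nat.cast : ℕ → ℝ) hLm.symm
      have hfj : f j = (latLen u i j : ℝ) / (mq u i j : ℝ) := by rw [hf]
      rw [hfj, htR, hLr]
      field_simp
    have key : ∑ j ∈ E, w j * f j ≤ 1 := by
      have hsum1 : ∑ j ∈ E, w j * f j
          = ∑ j ∈ E, w j + ∑ j ∈ E, w j * tR (latLen u i j) (KK u i) := by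
        rw [← Finset.sum_add_distrib]
        apply Finset.sum_congr rfl
        intro j hj
        rw [hfsplit j hj]
        ring
      have hsum2 : ∑ j ∈ E, w j * tR (latLen u i j) (KK u i)
          ≤ w i * ∑ j ∈ E, tR (latLen u i j) (KK u i) := by
        rw [Finset.mul_sum]
        apply Finset.sum_le_sum
        intro j hj
        exact mul_le_mul_of_nonneg_right (hmax j (Finset.mem_univ j)) (tR_nonneg _ _)
      have hpar := parity_sum u i h2
      have hsum3 : w i * ∑ j ∈ E, tR (latLen u i j) (KK u i) ≤ w i * 1 :=
        mul_le_mul_of_nonneg_left hpar hwi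
      rw [hsum1, hEsum]
      linarith
    set p : Fin 4 → ℝ := fun j => if j = i then 1 - ∑ j ∈ E, w j * f j else w j * f j
      with hp
    have hpE : ∀ j ∈ E, p j = w j * f j := fun j hj => by
      rw [hp]
      exact if_neg (Finset.mem_erase.mp hj).1
    have hpsumE : ∑ j ∈ E, p j = ∑ j ∈ E, w j * f j := Finset.sum_congr rfl hpE
    have hp1 : ∑ j, p j = 1 := by
      have hpi : p i = 1 - ∑ j ∈ E, w j * f j := by rw [hp]; exact if_pos rfl
      rw [← Finset.add_sum_erase Finset.univ p (Finset.mem_univ i), ← hE, hpsumE, hpi]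
      ring
    have hp0 : ∀ j, 0 ≤ p j := by
      intro j
      by_cases hj : j = i
      · have hpj : p j = 1 - ∑ j ∈ E, w j * f j := by rw [hp]; exact if_pos hj
        rw [hpj]; linarith [key]
      · have hpj : p j = w j * f j := by rw [hp]; exact if_neg hj
        rw [hpj]; exact mul_nonneg (hwnn j) (hfnn j)
    refine Set.mem_iUnion.mpr ⟨i, ⟨∑ j, p j • toR (Qv u i j), ?_, ?_⟩⟩
    · rw [lsimplex, ← affineCombination_eq_linear_combination Finset.univ _ p hp1]
      exact affineCombination_mem_convexHull (fun j _ => hp0 j) hp1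
    · show toR (u i) + (KK u i : ℝ) • ∑ j, p j • toR (Qv u i j) = x
      rw [Finset.smul_sum]
      have hterm : ∀ j, (KK u i : ℝ) • p j • toR (Qv u i j)
          = if j = i then 0 else w j • (toR (u j) - toR (u i)) := by
        intro j
        by_cases hj : j = i
        · subst hj
          rw [if_pos rfl, Qv_self, toR_zero, smul_zero, smul_zero]
        · have hjE : j ∈ E := Finset.mem_erase.mpr ⟨hj, Finset.mem_univ j⟩
          have hL2 : 2 ≤ latLen u i j := h2 j hjE
          have hm := mq_pos i j (hKle j hjE)
          have hmr : (0:ℝ) < (mq u i j : ℝ) := by exact_mod_cast hm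
          have hLr : (0:ℝ) < (latLen u i j : ℝ) := by exact_mod_cast by omega
          rw [if_neg hj, smul_comm, K_smul_Qv i j hj (by omega), hp]
          simp only [if_neg hj]
          rw [smul_smul]
          have hcoef : w j * f j * ((mq u i j : ℝ) / (latLen u i j : ℝ)) = w j := by
            rw [hf]
            field_simp
          rw [hcoef]
      rw [Finset.sum_congr rfl fun j _ => hterm j]
      rw [← Finset.add_sum_erase Finset.univ _ (Finset.mem_univ i), if_pos rfl, zero_add,
        ← hE]
      have hEterm : ∑ j ∈ E, (if j = i then 0 else w j • (toR (u j) - toR (u i)))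
          = ∑ j ∈ E, w j • (toR (u j) - toR (u i)) :=
        Finset.sum_congr rfl fun j hj => if_neg (Finset.mem_erase.mp hj).1
      rw [hEterm, hxeq', ← Finset.add_sum_erase Finset.univ _ (Finset.mem_univ i), ← hE]
      have hsub : ∑ j ∈ E, w j • (toR (u j) - toR (u i))
          = ∑ j ∈ E, w j • toR (u j) - (∑ j ∈ E, w j) • toR (u i) := by
        rw [Finset.sum_smul, ← Finset.sum_sub_distrib]
        apply Finset.sum_congr rfl
        intro j hj
        rw [smul_sub]
      rw [hsub, hEsum]
      module
  · -- each piece is contained in the simplex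
    apply Set.iUnion_subset
    intro a
    intro y hy
    rw [image_piece] at hy
    have hsub : Set.range (Vx u a) ⊆ lsimplex u := by
      rintro z ⟨j, rfl⟩
      exact Vx_mem a j (fun j' hj' => hlen a j' (Ne.symm (Finset.mem_erase.mp hj').1))
    have : convexHull ℝ (Set.range (Vx u a)) ⊆ lsimplex u :=
      convexHull_min hsub (convex_convexHull ℝ _)
    exact this hy
end
end

section
/- Let P = conv(u_0, …, u_n) ⊆ ℝ^n be a full-dimensional lattice simplex, fix an index i and an integer k with 2 ≤ k ≤ min_{j≠i} l_{ij}, and let P_{i,k} be the associated k-dilation. Then P_{i,k} ⊆ P, and P_{i,k} is a lattice translate of the k-fold dilation of a lattice simplex: explicitly, P_{i,k} = u_i + k·Q where Q = conv({0} ∪ {((l_{ij} − r_{ij,k})/k)·ũ_{ij} : j ≠ i}) with ũ_{ij} = (u_j − u_i)/l_{ij} ∈ ℤ^n, and Q is a lattice simplex. -/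
open Finset Pointwise

noncomputable section

/-! Put `t_j = (l_{ij} - r_{ij,k}) / l_{ij} ∈ [0, 1]`. The vertex of `P_{i,k}` on the edge
`u_i u_j` is `u_i + t_j (u_j - u_i)`, so it lies in `P`, and it equals `u_i + k Q_j` because
`l_{ij} - r_{ij,k} = k ⌊l_{ij} / k⌋`. Hence `Q_j = ⌊l_{ij} / k⌋ ũ_{ij}` is a lattice point, `P_{i,k}` is
the image of `Q` under the affine map `y ↦ u_i + k y`, and `Q` is a simplex because its edges at `0`
are nonzero multiples of the edges of `P` at `u_i`. -/

theorem image_const_add_smul_convexHull {𝕜 E : Type*} [CommRing 𝕜] [PartialOrder 𝕜]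
    [AddCommGroup E] [Module 𝕜 E] (a : E) (c : 𝕜) (s : Set E) :
    (fun y => a + c • y) '' convexHull 𝕜 s = convexHull 𝕜 ((fun y => a + c • y) '' s) :=
  (AffineMap.const 𝕜 E a + c • AffineMap.id 𝕜 E).image_convexHull s

theorem AffineIndependent.of_vsub_eq_smul_vsub {k V P ι : Type*} [Field k] [AddCommGroup V]
    [Module k V] [AddTorsor V P] {p q : ι → P} (hp : AffineIndependent k p) (i : ι)
    (c : ι → k) (hc : ∀ j, j ≠ i → c j ≠ 0) (hq : ∀ j, j ≠ i → q j -ᵥ q i = c j • (p j -ᵥ p i)) :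
    AffineIndependent k q := by
  rw [affineIndependent_iff_linearIndependent_vsub k q i]
  rw [affineIndependent_iff_linearIndependent_vsub k p i] at hp
  convert hp.units_smul fun j => Units.mk0 (c j) (hc j j.2) using 1
  funext j
  simp [hq j j.2, Units.smul_def]

theorem Nat.cast_sub_mod_div {K : Type*} [DivisionRing K] [CharZero K] (l k : ℕ) :
    ((l : K) - (l % k : ℕ)) / k = (l / k : ℕ) := by
  rcases eq_or_ne k 0 with rfl | hk
  · simp
  rw [div_eq_iff (Nat.cast_ne_zero.mpr hk), sub_eq_iff_eq_add]
  exact_mod_cast (Nat.div_add_mod' l k).symm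

section LatticeSimplex

variable {n m : ℕ} (u : Fin m → Fin n → ℤ) (i j : Fin m) (k : ℕ)

theorem latLen_dvd_sub (x : Fin n) : (latLen u i j : ℤ) ∣ u j x - u i x :=
  Int.natCast_dvd.mpr (Finset.gcd_dvd (Finset.mem_univ x))

theorem exists_int_primVec_apply (x : Fin n) : ∃ z : ℤ, primVec u i j x = z := by
  rcases eq_or_ne (latLen u i j) 0 with hl | hl
  · exact ⟨0, by simp [primVec, hl]⟩
  · obtain ⟨z, hz⟩ := latLen_dvd_sub u i j x
    refine ⟨z, ?_⟩
    simp only [primVec, toR, Pi.smul_apply, Pi.sub_apply, smul_eq_mul]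
    rw [← Int.cast_sub, hz]
    push_cast
    field_simp

theorem sub_rmod_div_latLen_mem_Icc :
    ((latLen u i j : ℝ) - rmod u i j k) / latLen u i j ∈ Set.Icc (0 : ℝ) 1 := by
  have hr : (rmod u i j k : ℝ) ≤ latLen u i j := by exact_mod_cast Nat.mod_le _ _
  constructor
  · exact div_nonneg (by linarith) (Nat.cast_nonneg _)
  · exact div_le_one_of_le₀ (by linarith [(Nat.cast_nonneg _ : (0 : ℝ) ≤ rmod u i j k)])
      (Nat.cast_nonneg _)

theorem dilVert_of_ne (hj : j ≠ i) (hl : latLen u i j ≠ 0) :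
    dilVert u i k j = toR (u i) +
      (((latLen u i j : ℝ) - rmod u i j k) / latLen u i j) • (toR (u j) - toR (u i)) := by
  have hl' : (latLen u i j : ℝ) ≠ 0 := Nat.cast_ne_zero.mpr hl
  funext x
  simp only [dilVert, if_neg hj, toR, Pi.add_apply, Pi.smul_apply, Pi.sub_apply, smul_eq_mul]
  field_simp
  ring

theorem dil_subset_lsimplex (hl : ∀ j, j ≠ i → latLen u i j ≠ 0) : dil u i k ⊆ lsimplex u := by
  have hmem : ∀ j, toR (u j) ∈ lsimplex u := fun j => subset_convexHull ℝ _ ⟨j, rfl⟩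
  refine convexHull_min ?_ (convex_convexHull ℝ _)
  rintro _ ⟨j, rfl⟩
  by_cases hj : j = i
  · simpa [dilVert, hj] using hmem i
  · rw [dilVert_of_ne u i j k hj (hl j hj)]
    exact (convex_convexHull ℝ _).add_smul_sub_mem (hmem i) (hmem j)
      (sub_rmod_div_latLen_mem_Icc u i j k)

end LatticeSimplex

/-- `P_{i,k} ⊆ P`, and `P_{i,k} = u_i + k·Q` where
`Q = conv({0} ∪ {((l_{ij} − r_{ij,k})/k)·ũ_{ij} : j ≠ i})` is a lattice simplex
(with the primitive edge vectors `ũ_{ij} = (u_j − u_i)/l_{ij}` lattice vectors). -/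
theorem dilation_is_dilated_lattice_simplex
    (n : ℕ) (u : Fin (n + 1) → Fin n → ℤ)
    (hind : AffineIndependent ℝ fun i => toR (u i))
    (i : Fin (n + 1)) (k : ℕ) (hk : 2 ≤ k)
    (hkl : ∀ j, j ≠ i → k ≤ latLen u i j)
    (Qv : Fin (n + 1) → Fin n → ℝ)
    (hQv : ∀ j, Qv j =
      if j = i then 0
      else (((latLen u i j : ℝ) - (rmod u i j k : ℝ)) / (k : ℝ)) • primVec u i j) :
    dil u i k ⊆ lsimplex u ∧
    (∀ j, j ≠ i → ∀ x, ∃ z : ℤ, primVec u i j x = (z : ℝ)) ∧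
    (∀ j x, ∃ z : ℤ, Qv j x = (z : ℝ)) ∧
    AffineIndependent ℝ Qv ∧
    dil u i k = (fun y => toR (u i) + (k : ℝ) • y) '' convexHull ℝ (Set.range Qv) := by
  have hk0 : (k : ℝ) ≠ 0 := Nat.cast_ne_zero.mpr (by omega)
  have hl : ∀ j, j ≠ i → latLen u i j ≠ 0 := fun j hj => by have := hkl j hj; omega
  have hQv_of_ne : ∀ j, j ≠ i → Qv j = ((latLen u i j / k : ℕ) : ℝ) • primVec u i j :=
    fun j hj => by rw [hQv, if_neg hj, rmod, Nat.cast_sub_mod_div]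
  have hvert : ∀ j, dilVert u i k j = toR (u i) + (k : ℝ) • Qv j := by
    intro j
    by_cases hj : j = i
    · simp [dilVert, hQv, hj]
    · rw [dilVert_of_ne u i j k hj (hl j hj), hQv, if_neg hj, primVec, smul_smul, smul_smul,
        mul_div_cancel₀ _ hk0, div_eq_mul_inv]
  refine ⟨dil_subset_lsimplex u i k hl, fun j _ => exists_int_primVec_apply u i j, ?_, ?_, ?_⟩
  · intro j x
    by_cases hj : j = i
    · exact ⟨0, by simp [hQv, hj]⟩
    · obtain ⟨z, hz⟩ := exists_int_primVec_apply u i j x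
      exact ⟨(latLen u i j / k : ℕ) * z, by
        rw [hQv_of_ne j hj, Pi.smul_apply, hz, smul_eq_mul, Int.cast_mul, Int.cast_natCast]⟩
  · refine hind.of_vsub_eq_smul_vsub i (fun j => (latLen u i j / k : ℕ) * (latLen u i j : ℝ)⁻¹)
      (fun j hj => ?_) (fun j hj => ?_)
    · have hquot : 0 < latLen u i j / k := Nat.div_pos (hkl j hj) (by omega)
      exact mul_ne_zero (by positivity) (by simpa using hl j hj)
    · simp [hQv_of_ne j hj, hQv, primVec, smul_smul]
  · rw [image_const_add_smul_convexHull, ← Set.range_comp]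
    exact congrArg (convexHull ℝ ∘ Set.range) (funext hvert)
end
end

section
/- Let P = conv(u_0, …, u_n) ⊆ ℝ^n be a full-dimensional lattice simplex, fix an index i and an integer k with 2 ≤ k ≤ min_{j≠i} l_{ij}, and let P_{i,k} be the associated k-dilation. Suppose u ∈ P is written uniquely as u = Σ_{j=0}^n λ_j u_j with all λ_j ≥ 0 and Σ_{j=0}^n λ_j = 1. Then u ∉ P_{i,k} if and only if λ_i < Σ_{j≠i} (r_{ij,k}/(l_{ij} − r_{ij,k}))·λ_j. -/
open Finset Pointwise

noncomputable section

/-! With `t_j = r_{ij,k}/l_{ij}`, the vertices of `P_{i,k}` are `q_j = (1 - t_j) u_j + t_j u_i`,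
so a point `∑ w_j q_j` has barycentric coordinates `(1 - t_j) w_j` (`j ≠ i`) and
`w_i + ∑_{j ≠ i} t_j w_j` with respect to `P`. This change of weights is invertible; by uniqueness
of barycentric coordinates, `u ∈ P_{i,k}` iff the preimage of `λ` is nonnegative. Its entries
`λ_j/(1 - t_j)` for `j ≠ i` always are, and its `i`-th entry is `λ_i - ∑_{j ≠ i} t_j/(1 - t_j) λ_j`,
where `t_j/(1 - t_j) = r_{ij,k}/(l_{ij} - r_{ij,k})`. -/

open AffineMap

theorem AffineIndependent.eq_of_sum_smul_eq {k V ι : Type*} [Ring k] [AddCommGroup V] [Module k V]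
    [Fintype ι] {p : ι → V} (hp : AffineIndependent k p)
    {a b : ι → k} (ha : ∑ j, a j = 1) (hb : ∑ j, b j = 1)
    (hab : ∑ j, a j • p j = ∑ j, b j • p j) : a = b := by
  refine (affineIndependent_iff_eq_of_fintype_affineCombination_eq k p).mp hp a b ha hb ?_
  rwa [Finset.univ.affineCombination_eq_linear_combination _ _ ha,
    Finset.univ.affineCombination_eq_linear_combination _ _ hb]

section

variable {𝕜 E ι : Type*} [Field 𝕜] [AddCommGroup E] [Module 𝕜 E] [Fintype ι] [DecidableEq ι]
  (i : ι) (t : ι → 𝕜)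

def lineMapWeights (w : ι → 𝕜) (j : ι) : 𝕜 :=
  (1 - t j) * w j + if j = i then ∑ l, t l * w l else 0

def lineMapWeightsInv (lam : ι → 𝕜) (j : ι) : 𝕜 :=
  if j = i then lam i - ∑ l ∈ univ.erase i, t l / (1 - t l) * lam l else lam j / (1 - t j)

variable {i t}

theorem sum_smul_lineMap (p : ι → E) (w : ι → 𝕜) :
    ∑ j, w j • lineMap (p j) (p i) (t j) = ∑ j, lineMapWeights i t w j • p j := by
  simp only [lineMapWeights, lineMap_apply_module, smul_add, add_smul, smul_smul, ite_smul,
    zero_smul, Finset.sum_add_distrib, Finset.sum_ite_eq', Finset.mem_univ, if_true,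
    ← Finset.sum_smul]
  simp only [mul_comm]

theorem sum_lineMapWeights (w : ι → 𝕜) : ∑ j, lineMapWeights i t w j = ∑ j, w j := by
  simp [lineMapWeights, Finset.sum_add_distrib, sub_mul, Finset.sum_sub_distrib]

theorem lineMapWeights_self (w : ι → 𝕜) :
    lineMapWeights i t w i = w i + ∑ l ∈ univ.erase i, t l * w l := by
  rw [lineMapWeights, if_pos rfl, ← Finset.add_sum_erase _ _ (mem_univ i)]
  ring

theorem lineMapWeights_of_ne {j : ι} (hj : j ≠ i) (w : ι → 𝕜) :
    lineMapWeights i t w j = (1 - t j) * w j := by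
  simp [lineMapWeights, hj]

theorem lineMapWeightsInv_lineMapWeights (ht : ∀ j ≠ i, t j ≠ 1) (w : ι → 𝕜) :
    lineMapWeightsInv i t (lineMapWeights i t w) = w := by
  funext j
  by_cases hj : j = i
  · subst hj
    rw [lineMapWeightsInv, if_pos rfl, lineMapWeights_self, add_sub_assoc, add_eq_left,
      sub_eq_zero]
    refine Finset.sum_congr rfl fun l hl => ?_
    have := sub_ne_zero.2 (ht l (Finset.ne_of_mem_erase hl)).symm
    rw [lineMapWeights_of_ne (Finset.ne_of_mem_erase hl)]
    field_simp
  · have := sub_ne_zero.2 (ht j hj).symm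
    rw [lineMapWeightsInv, if_neg hj, lineMapWeights_of_ne hj]
    field_simp

theorem lineMapWeights_lineMapWeightsInv (ht : ∀ j ≠ i, t j ≠ 1) (lam : ι → 𝕜) :
    lineMapWeights i t (lineMapWeightsInv i t lam) = lam := by
  funext j
  by_cases hj : j = i
  · subst hj
    rw [lineMapWeights_self, lineMapWeightsInv, if_pos rfl, sub_add_eq_add_sub, add_sub_assoc,
      add_eq_left, sub_eq_zero]
    refine Finset.sum_congr rfl fun l hl => ?_
    rw [lineMapWeightsInv, if_neg (Finset.ne_of_mem_erase hl)]
    ring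
  · have := sub_ne_zero.2 (ht j hj).symm
    rw [lineMapWeights_of_ne hj, lineMapWeightsInv, if_neg hj]
    field_simp

end

section

variable {𝕜 E ι : Type*} [Field 𝕜] [LinearOrder 𝕜] [IsStrictOrderedRing 𝕜]
  [AddCommGroup E] [Module 𝕜 E] [Fintype ι]

theorem convexHull_range_eq_image_stdSimplex (v : ι → E) :
    convexHull 𝕜 (Set.range v) = (fun w => ∑ j, w j • v j) '' stdSimplex 𝕜 ι := by
  classical
  rw [← convexHull_rangle_single_eq_stdSimplex]
  have hv : v = Fintype.linearCombination 𝕜 v ∘ fun j => Pi.single j 1 := by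
    funext j
    simp [Fintype.linearCombination_apply_single]
  conv_lhs => rw [hv, Set.range_comp, ← LinearMap.image_convexHull]
  rfl

theorem AffineIndependent.sum_smul_mem_convexHull_lineMap_iff [DecidableEq ι] {p : ι → E}
    (hp : AffineIndependent 𝕜 p) {i : ι} {t : ι → 𝕜} (ht : ∀ j ≠ i, t j < 1) {lam : ι → 𝕜}
    (hlam : ∀ j, 0 ≤ lam j) (hsum : ∑ j, lam j = 1) :
    ∑ j, lam j • p j ∈ convexHull 𝕜 (Set.range fun j => lineMap (p j) (p i) (t j)) ↔
      ∑ j ∈ univ.erase i, t j / (1 - t j) * lam j ≤ lam i := by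
  have ht' : ∀ j ≠ i, t j ≠ 1 := fun j hj => (ht j hj).ne
  rw [convexHull_range_eq_image_stdSimplex]
  simp only [Set.mem_image, sum_smul_lineMap]
  constructor
  · rintro ⟨w, ⟨hw0, hw1⟩, hw⟩
    have hW : lineMapWeights i t w = lam :=
      hp.eq_of_sum_smul_eq ((sum_lineMapWeights w).trans hw1) hsum hw
    have hwi := hw0 i
    rw [← lineMapWeightsInv_lineMapWeights ht' w, hW, lineMapWeightsInv, if_pos rfl] at hwi
    linarith
  · intro h
    refine ⟨lineMapWeightsInv i t lam, ⟨fun j => ?_, ?_⟩,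
      by rw [lineMapWeights_lineMapWeightsInv ht']⟩
    · by_cases hj : j = i
      · subst hj
        simpa [lineMapWeightsInv] using h
      · simpa only [lineMapWeightsInv, if_neg hj] using
          div_nonneg (hlam j) (sub_nonneg.2 (ht j hj).le)
    · rw [← sum_lineMapWeights, lineMapWeights_lineMapWeightsInv ht', hsum]

end

theorem dilVert_eq_lineMap {n m : ℕ} (u : Fin m → Fin n → ℤ) (i : Fin m) (k : ℕ)
    (hl : ∀ j ≠ i, latLen u i j ≠ 0) :
    dilVert u i k =
      fun j => lineMap (toR (u j)) (toR (u i)) ((rmod u i j k : ℝ) / latLen u i j) := by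
  funext j
  by_cases hj : j = i
  · subst hj
    simp [dilVert]
  · rw [dilVert, if_neg hj, lineMap_apply_module, sub_div,
      div_self (Nat.cast_ne_zero.2 (hl j hj))]

theorem rmod_lt_latLen {n m : ℕ} {u : Fin m → Fin n → ℤ} {i j : Fin m} {k : ℕ} (hk : 0 < k)
    (hkl : k ≤ latLen u i j) : rmod u i j k < latLen u i j :=
  (Nat.mod_lt _ hk).trans_le hkl

/-- for `u = Σ λ_j u_j ∈ P` with barycentric coordinates `λ`, one has
`u ∉ P_{i,k}` iff `λ_i < Σ_{j≠i} (r_{ij,k}/(l_{ij} − r_{ij,k}))·λ_j`. -/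
theorem not_mem_dilation_iff
    (n : ℕ) (u : Fin (n + 1) → Fin n → ℤ)
    (hind : AffineIndependent ℝ fun i => toR (u i))
    (i : Fin (n + 1)) (k : ℕ) (hk : 2 ≤ k)
    (hkl : ∀ j, j ≠ i → k ≤ latLen u i j)
    (lam : Fin (n + 1) → ℝ) (hnn : ∀ j, 0 ≤ lam j) (hsum : ∑ j, lam j = 1) :
    (∑ j, lam j • toR (u j)) ∉ dil u i k ↔
      lam i < ∑ j ∈ Finset.univ.erase i,
        ((rmod u i j k : ℝ) / ((latLen u i j : ℝ) - (rmod u i j k : ℝ))) * lam j := by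
  have hl : ∀ j ≠ i, (0 : ℝ) < latLen u i j := fun j hj => by
    have := hkl j hj
    exact_mod_cast (by omega : 0 < latLen u i j)
  have ht : ∀ j ≠ i, (rmod u i j k : ℝ) / latLen u i j < 1 := fun j hj =>
    (div_lt_one (hl j hj)).2 (by exact_mod_cast rmod_lt_latLen (by omega) (hkl j hj))
  rw [dil, dilVert_eq_lineMap u i k fun j hj => by exact_mod_cast (hl j hj).ne',
    hind.sum_smul_mem_convexHull_lineMap_iff ht hnn hsum, not_le]
  refine Iff.of_eq (congrArg _ (Finset.sum_congr rfl fun j hj => ?_))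
  have := (hl j (Finset.ne_of_mem_erase hj)).ne'
  field_simp
end
end

section
/- Let P = conv(u_0, …, u_n) ⊆ ℝ^n be a full-dimensional lattice simplex, fix an integer k with 2 ≤ k ≤ min_{j≠0} l_{0j}, let t = (t_1, …, t_n) ∈ ℤ_{≥0}^n, and let P_{0,k,t} be the translated k-dilation. Given u ∈ P written uniquely as u = Σ_{i=0}^n λ_i u_i with all λ_i ≥ 0 and Σ_{i=0}^n λ_i = 1, we have u ∈ P_{0,k,t} if and only if both: (i) t_i/l_{0i} ≤ λ_i for all 1 ≤ i ≤ n, and (ii) Σ_{i=1}^n (r_{0i,k}/(l_{0i} − r_{0i,k}))·λ_i ≤ λ_0 + Σ_{i=1}^n t_i/(l_{0i} − r_{0i,k}). -/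
open Finset Pointwise

noncomputable section

lemma mem_convexHull_range_iff'' {E ι : Type*} [AddCommGroup E] [Module ℝ E] [Fintype ι]
    [DecidableEq ι] (v : ι → E) (x : E) :
    x ∈ convexHull ℝ (Set.range v) ↔
      ∃ w : ι → ℝ, (∀ i, 0 ≤ w i) ∧ ∑ i, w i = 1 ∧ ∑ i, w i • v i = x := by
  rw [convexHull_range_eq_exists_affineCombination]
  constructor
  · rintro ⟨s, w, h0, h1, rfl⟩
    refine ⟨fun i => if i ∈ s then w i else 0, fun i => ?_, ?_, ?_⟩
    · dsimp only; split
      · exact h0 _ ‹_›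
      · exact le_rfl
    · simp only
      rw [Finset.sum_ite_mem, Finset.univ_inter, h1]
    · rw [Finset.affineCombination_eq_linear_combination s v w h1]
      simp only [ite_smul, zero_smul]
      rw [Finset.sum_ite_mem, Finset.univ_inter]
  · rintro ⟨w, h0, h1, rfl⟩
    exact ⟨Finset.univ, w, fun i _ => h0 i, h1,
      Finset.affineCombination_eq_linear_combination _ v w h1⟩


/-- for `u = Σ λ_i u_i ∈ P` with barycentric coordinates `λ`, one has
`u ∈ P_{0,k,t}` iff `t_i/l_{0i} ≤ λ_i` for all `i ≠ 0` and
`Σ_{i≠0} (r_{0i,k}/(l_{0i} − r_{0i,k}))·λ_i ≤ λ_0 + Σ_{i≠0} t_i/(l_{0i} − r_{0i,k})`. -/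
theorem mem_translated_dilation_iff
    (n : ℕ) (u : Fin (n + 1) → Fin n → ℤ)
    (hind : AffineIndependent ℝ fun i => toR (u i))
    (k : ℕ) (hk : 2 ≤ k)
    (hkl : ∀ j, j ≠ (0 : Fin (n + 1)) → k ≤ latLen u 0 j)
    (t : Fin (n + 1) → ℕ) (ht0 : t 0 = 0)
    (lam : Fin (n + 1) → ℝ) (hnn : ∀ j, 0 ≤ lam j) (hsum : ∑ j, lam j = 1) :
    (∑ j, lam j • toR (u j)) ∈ dilT u 0 k t ↔
      (∀ i, i ≠ (0 : Fin (n + 1)) → (t i : ℝ) / (latLen u 0 i : ℝ) ≤ lam i) ∧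
      ∑ i ∈ Finset.univ.erase (0 : Fin (n + 1)),
          ((rmod u 0 i k : ℝ) / ((latLen u 0 i : ℝ) - (rmod u 0 i k : ℝ))) * lam i ≤
        lam 0 + ∑ i ∈ Finset.univ.erase (0 : Fin (n + 1)),
          (t i : ℝ) / ((latLen u 0 i : ℝ) - (rmod u 0 i k : ℝ)) := by
  classical
  have hLpos : ∀ j ∈ Finset.univ.erase (0 : Fin (n+1)), (0:ℝ) < (latLen u 0 j : ℝ) := by
    intro j hj
    have hj0 : j ≠ 0 := Finset.ne_of_mem_erase hj
    have h := hkl j hj0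
    have : 0 < latLen u 0 j := by omega
    exact_mod_cast this
  have hLR : ∀ j ∈ Finset.univ.erase (0 : Fin (n+1)),
      (0:ℝ) < (latLen u 0 j : ℝ) - (rmod u 0 j k : ℝ) := by
    intro j hj
    have hj0 : j ≠ 0 := Finset.ne_of_mem_erase hj
    have h1 : rmod u 0 j k < k := Nat.mod_lt _ (by omega)
    have h2 : rmod u 0 j k < latLen u 0 j := lt_of_lt_of_le h1 (hkl j hj0)
    have : (rmod u 0 j k : ℝ) < (latLen u 0 j : ℝ) := by exact_mod_cast h2
    linarith
  -- representation lemma for barycentric sums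
  have hrep : ∀ w : Fin (n+1) → ℝ, ∑ j, w j = 1 →
      ∑ j, w j • toR (u j) = toR (u 0) +
        ∑ j ∈ Finset.univ.erase (0 : Fin (n+1)),
          (w j * (latLen u 0 j : ℝ)) • primVec u 0 j := by
    intro w hw
    have hterm : ∀ j ∈ Finset.univ.erase (0 : Fin (n+1)),
        (w j * (latLen u 0 j : ℝ)) • primVec u 0 j
          = w j • toR (u j) - w j • toR (u 0) := by
      intro j hj
      have hL0 : (latLen u 0 j : ℝ) ≠ 0 := ne_of_gt (hLpos j hj)
      rw [primVec, smul_smul, mul_assoc, mul_inv_cancel₀ hL0, mul_one, smul_sub]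
    rw [Finset.sum_congr rfl hterm, Finset.sum_sub_distrib, ← Finset.sum_smul]
    have h2 : w 0 + ∑ j ∈ Finset.univ.erase (0 : Fin (n+1)), w j = 1 := by
      rw [Finset.add_sum_erase _ w (Finset.mem_univ 0)]; exact hw
    rw [← Finset.add_sum_erase _ (fun j => w j • toR (u j)) (Finset.mem_univ 0)]
    have h3 : (∑ j ∈ Finset.univ.erase (0 : Fin (n+1)), w j) = 1 - w 0 := by linarith
    rw [h3, sub_smul, one_smul]
    abel
  -- dilVert description
  have hdv : ∀ j ∈ Finset.univ.erase (0 : Fin (n+1)),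
      dilVert u 0 k j = toR (u 0) +
        (((latLen u 0 j : ℝ) - (rmod u 0 j k : ℝ))) • primVec u 0 j := by
    intro j hj
    have hj0 : j ≠ 0 := Finset.ne_of_mem_erase hj
    have hL0 : (latLen u 0 j : ℝ) ≠ 0 := ne_of_gt (hLpos j hj)
    funext x
    simp only [dilVert, if_neg hj0, primVec, toR, Pi.add_apply, Pi.smul_apply,
      Pi.sub_apply, smul_eq_mul]
    field_simp
    ring
  have hrep2 : ∀ w : Fin (n+1) → ℝ, ∑ j, w j = 1 →
      ∑ j, w j • dilVert u 0 k j = toR (u 0) +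
        ∑ j ∈ Finset.univ.erase (0 : Fin (n+1)),
          (w j * ((latLen u 0 j : ℝ) - (rmod u 0 j k : ℝ))) • primVec u 0 j := by
    intro w hw
    have hterm : ∀ j ∈ Finset.univ.erase (0 : Fin (n+1)),
        w j • dilVert u 0 k j = w j • toR (u 0)
          + (w j * ((latLen u 0 j : ℝ) - (rmod u 0 j k : ℝ))) • primVec u 0 j := by
      intro j hj
      rw [hdv j hj, smul_add, smul_smul]
    rw [← Finset.add_sum_erase _ (fun j => w j • dilVert u 0 k j) (Finset.mem_univ 0),
      Finset.sum_congr rfl hterm, Finset.sum_add_distrib, ← Finset.sum_smul]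
    have hdv0 : dilVert u 0 k (0 : Fin (n+1)) = toR (u 0) := by
      simp [dilVert]
    rw [hdv0]
    have h2 : w 0 + ∑ j ∈ Finset.univ.erase (0 : Fin (n+1)), w j = 1 := by
      rw [Finset.add_sum_erase _ w (Finset.mem_univ 0)]; exact hw
    have h3 : (∑ j ∈ Finset.univ.erase (0 : Fin (n+1)), w j) = 1 - w 0 := by linarith
    rw [h3, sub_smul, one_smul]
    abel
  -- uniqueness of coefficients
  have hzero : ∀ c : Fin (n+1) → ℝ,
      ∑ j ∈ Finset.univ.erase (0 : Fin (n+1)), c j • primVec u 0 j = 0 →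
      ∀ j ∈ Finset.univ.erase (0 : Fin (n+1)), c j = 0 := by
    intro c hc
    set g : Fin (n+1) → ℝ := fun i => c i * (latLen u 0 i : ℝ)⁻¹ with hgdef
    have hz : ∑ j ∈ Finset.univ.erase (0 : Fin (n+1)),
        (g j • toR (u j) - g j • toR (u 0)) = 0 := by
      have hterm : ∀ j ∈ Finset.univ.erase (0 : Fin (n+1)),
          g j • toR (u j) - g j • toR (u 0) = c j • primVec u 0 j := by
        intro j hj
        simp only [hgdef, primVec, smul_smul, smul_sub]
      rw [Finset.sum_congr rfl hterm]
      exact hc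
    set W : Fin (n+1) → ℝ := fun i =>
      if i = 0 then -(∑ i ∈ Finset.univ.erase (0 : Fin (n+1)), g i) else g i with hWdef
    have hW0 : ∀ i ∈ Finset.univ.erase (0 : Fin (n+1)), W i = g i := by
      intro i hi
      rw [hWdef]; simp only [if_neg (Finset.ne_of_mem_erase hi)]
    have hWsum : ∑ i, W i = 0 := by
      rw [← Finset.add_sum_erase _ W (Finset.mem_univ 0),
        Finset.sum_congr rfl hW0]
      have hW00 : W 0 = -(∑ i ∈ Finset.univ.erase (0 : Fin (n+1)), g i) := by
        simp [hWdef]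
      rw [hW00]; ring
    have hWvec : ∑ i, W i • toR (u i) = 0 := by
      rw [← Finset.add_sum_erase _ (fun i => W i • toR (u i)) (Finset.mem_univ 0)]
      have hterm : ∀ i ∈ Finset.univ.erase (0 : Fin (n+1)),
          W i • toR (u i) = g i • toR (u i) := fun i hi => by rw [hW0 i hi]
      rw [Finset.sum_congr rfl hterm]
      rw [Finset.sum_sub_distrib, ← Finset.sum_smul] at hz
      have hW00 : W 0 = -(∑ i ∈ Finset.univ.erase (0 : Fin (n+1)), g i) := by
        simp [hWdef]
      rw [hW00, neg_smul, add_comm, ← sub_eq_add_neg]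
      exact hz
    intro j hj
    have hWj := affineIndependent_iff.mp hind Finset.univ W hWsum hWvec j (Finset.mem_univ j)
    rw [hW0 j hj, hgdef] at hWj
    simp only at hWj
    have hL0 : (latLen u 0 j : ℝ)⁻¹ ≠ 0 := inv_ne_zero (ne_of_gt (hLpos j hj))
    rcases mul_eq_zero.mp hWj with h | h
    · exact h
    · exact absurd h hL0
  have huniq : ∀ a b : Fin (n+1) → ℝ,
      ∑ j ∈ Finset.univ.erase (0 : Fin (n+1)), a j • primVec u 0 j
        = ∑ j ∈ Finset.univ.erase (0 : Fin (n+1)), b j • primVec u 0 j →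
      ∀ j ∈ Finset.univ.erase (0 : Fin (n+1)), a j = b j := by
    intro a b hab j hj
    have h1 : ∑ j ∈ Finset.univ.erase (0 : Fin (n+1)),
        (a j - b j) • primVec u 0 j = 0 := by
      have : ∀ j ∈ Finset.univ.erase (0 : Fin (n+1)),
          (a j - b j) • primVec u 0 j = a j • primVec u 0 j - b j • primVec u 0 j :=
        fun j _ => sub_smul _ _ _
      rw [Finset.sum_congr rfl this, Finset.sum_sub_distrib, hab, sub_self]
    have := hzero _ h1 j hj
    linarith
  -- membership characterization
  have hmem : (∑ j, lam j • toR (u j)) ∈ dilT u 0 k t ↔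
      ∃ w : Fin (n+1) → ℝ, (∀ i, 0 ≤ w i) ∧ ∑ i, w i = 1 ∧
        ∀ j ∈ Finset.univ.erase (0 : Fin (n+1)),
          w j * ((latLen u 0 j : ℝ) - (rmod u 0 j k : ℝ)) + (t j : ℝ)
            = lam j * (latLen u 0 j : ℝ) := by
    rw [dilT, dil]
    constructor
    · rintro ⟨y, hy, heq⟩
      rw [mem_convexHull_range_iff''] at hy
      obtain ⟨w, hw0, hw1, rfl⟩ := hy
      refine ⟨w, hw0, hw1, ?_⟩
      dsimp only at heq
      rw [hrep2 w hw1, hrep lam hsum, add_assoc] at heq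
      have heq2 := add_left_cancel heq
      rw [← Finset.sum_add_distrib] at heq2
      have heq3 : ∑ j ∈ Finset.univ.erase (0 : Fin (n+1)),
          (w j * ((latLen u 0 j : ℝ) - (rmod u 0 j k : ℝ)) + (t j : ℝ)) • primVec u 0 j
          = ∑ j ∈ Finset.univ.erase (0 : Fin (n+1)),
            (lam j * (latLen u 0 j : ℝ)) • primVec u 0 j := by
        rw [← heq2]
        exact Finset.sum_congr rfl fun j hj => add_smul _ _ _
      exact huniq _ _ heq3
    · rintro ⟨w, hw0, hw1, hweq⟩
      refine ⟨∑ i, w i • dilVert u 0 k i, ?_, ?_⟩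
      · rw [mem_convexHull_range_iff'']
        exact ⟨w, hw0, hw1, rfl⟩
      · dsimp only
        rw [hrep2 w hw1, hrep lam hsum, add_assoc, ← Finset.sum_add_distrib]
        congr 1
        refine Finset.sum_congr rfl fun j hj => ?_
        rw [← add_smul, hweq j hj]
  -- key algebraic identity
  have key : lam 0 + (∑ i ∈ Finset.univ.erase (0 : Fin (n+1)),
        (t i : ℝ) / ((latLen u 0 i : ℝ) - (rmod u 0 i k : ℝ)))
      - ∑ i ∈ Finset.univ.erase (0 : Fin (n+1)),
        ((rmod u 0 i k : ℝ) / ((latLen u 0 i : ℝ) - (rmod u 0 i k : ℝ))) * lam i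
      = 1 - ∑ j ∈ Finset.univ.erase (0 : Fin (n+1)),
        (lam j * (latLen u 0 j : ℝ) - (t j : ℝ))
          / ((latLen u 0 j : ℝ) - (rmod u 0 j k : ℝ)) := by
    have h1 : lam 0 + ∑ j ∈ Finset.univ.erase (0 : Fin (n+1)), lam j = 1 := by
      rw [Finset.add_sum_erase _ lam (Finset.mem_univ 0)]; exact hsum
    have h2 : ∀ j ∈ Finset.univ.erase (0 : Fin (n+1)),
        (lam j * (latLen u 0 j : ℝ) - (t j : ℝ))
            / ((latLen u 0 j : ℝ) - (rmod u 0 j k : ℝ))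
          = lam j + ((rmod u 0 j k : ℝ) / ((latLen u 0 j : ℝ) - (rmod u 0 j k : ℝ))) * lam j
            - (t j : ℝ) / ((latLen u 0 j : ℝ) - (rmod u 0 j k : ℝ)) := by
      intro j hj
      have h0 : (latLen u 0 j : ℝ) - (rmod u 0 j k : ℝ) ≠ 0 := ne_of_gt (hLR j hj)
      field_simp
      ring
    rw [Finset.sum_congr rfl h2, Finset.sum_sub_distrib, Finset.sum_add_distrib]
    linarith
  rw [hmem]
  constructor
  · rintro ⟨w, hw0, hw1, hweq⟩
    constructor
    · intro i hi
      have hie : i ∈ Finset.univ.erase (0 : Fin (n+1)) :=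
        Finset.mem_erase.mpr ⟨hi, Finset.mem_univ i⟩
      have h1 := hweq i hie
      have h2 : (0:ℝ) ≤ w i * ((latLen u 0 i : ℝ) - (rmod u 0 i k : ℝ)) :=
        mul_nonneg (hw0 i) (le_of_lt (hLR i hie))
      rw [div_le_iff₀ (hLpos i hie)]
      linarith
    · have hwA : ∀ j ∈ Finset.univ.erase (0 : Fin (n+1)),
          w j = (lam j * (latLen u 0 j : ℝ) - (t j : ℝ))
            / ((latLen u 0 j : ℝ) - (rmod u 0 j k : ℝ)) := by
        intro j hj
        rw [eq_div_iff (ne_of_gt (hLR j hj))]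
        linarith [hweq j hj]
      have h4 : w 0 + ∑ j ∈ Finset.univ.erase (0 : Fin (n+1)), w j = 1 := by
        rw [Finset.add_sum_erase _ w (Finset.mem_univ 0)]; exact hw1
      rw [Finset.sum_congr rfl hwA] at h4
      have h5 := hw0 0
      linarith
  · rintro ⟨h1, h2⟩
    refine ⟨fun i => if i = 0 then
        1 - ∑ j ∈ Finset.univ.erase (0 : Fin (n+1)),
          (lam j * (latLen u 0 j : ℝ) - (t j : ℝ))
            / ((latLen u 0 j : ℝ) - (rmod u 0 j k : ℝ))
      else (lam i * (latLen u 0 i : ℝ) - (t i : ℝ))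
            / ((latLen u 0 i : ℝ) - (rmod u 0 i k : ℝ)), ?_, ?_, ?_⟩
    · intro i
      dsimp only
      by_cases hi : i = 0
      · rw [if_pos hi]
        linarith
      · rw [if_neg hi]
        have hie : i ∈ Finset.univ.erase (0 : Fin (n+1)) :=
          Finset.mem_erase.mpr ⟨hi, Finset.mem_univ i⟩
        apply div_nonneg
        · have h3 := h1 i hi
          rw [div_le_iff₀ (hLpos i hie)] at h3
          linarith
        · linarith [hLR i hie]
    · rw [← Finset.add_sum_erase _ _ (Finset.mem_univ (0 : Fin (n+1)))]
      rw [if_pos rfl,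
        Finset.sum_ite_of_false (fun j hj => Finset.ne_of_mem_erase hj) _ _]
      ring
    · intro j hj
      dsimp only
      rw [if_neg (Finset.ne_of_mem_erase hj),
        div_mul_cancel₀ _ (ne_of_gt (hLR j hj))]
      ring
end
end

section
/- Let P = conv(u_0, u_1, u_2, u_3, u_4) ⊆ ℝ^4 be a full-dimensional lattice simplex with lattice length l(P) ≥ 3 such that no edge of P has lattice length 5. Then there exist finitely many triples (i, k, t_i), with 0 ≤ i ≤ 4, integers k satisfying 3 ≤ k ≤ min_{j≠i} l_{ij}, and t_i ∈ ℤ_{≥0}^4, such that each translated dilation P_{i,k,t_i} is contained in P and P equals the union of these P_{i,k,t_i}. -/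
open Finset Pointwise

noncomputable section

lemma mem_hull_iff {ι : Type*} [Fintype ι] [DecidableEq ι] (g : ι → Fin 4 → ℝ) (y : Fin 4 → ℝ) :
    y ∈ convexHull ℝ (Set.range g) ↔
      ∃ μ : ι → ℝ, (∀ j, 0 ≤ μ j) ∧ ∑ j, μ j = 1 ∧ ∑ j, μ j • g j = y := by
  rw [convexHull_range_eq_exists_affineCombination]
  constructor
  · rintro ⟨s, w, hw0, hw1, rfl⟩
    refine ⟨fun j => if j ∈ s then w j else 0, fun j => ?_, ?_, ?_⟩
    · by_cases h : j ∈ s <;> simp [h, hw0 j]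
    · simp only [Finset.sum_ite_mem, Finset.univ_inter]; exact hw1
    · rw [Finset.affineCombination_eq_linear_combination s g w hw1]
      rw [← Finset.sum_subset (Finset.subset_univ s)]
      · exact Finset.sum_congr rfl fun j hj => by simp [hj]
      · intro j _ hj; simp [hj]
  · rintro ⟨μ, h0, h1, rfl⟩
    exact ⟨univ, μ, fun i _ => h0 i, h1,
      (Finset.affineCombination_eq_linear_combination _ _ _ h1)⟩

lemma key_identity (u : Fin 5 → Fin 4 → ℤ) (i : Fin 5) (k : ℕ) (t : Fin 5 → ℕ) (μ : Fin 5 → ℝ) :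
    (∑ j, μ j • dilVert u i k j) + ∑ j ∈ Finset.univ.erase i, (t j : ℝ) • primVec u i j
    = (μ i + ∑ j ∈ Finset.univ.erase i,
        (μ j * (rmod u i j k : ℝ) / (latLen u i j : ℝ) - (t j : ℝ) / (latLen u i j : ℝ))) • toR (u i)
      + ∑ j ∈ Finset.univ.erase i,
        (μ j * (((latLen u i j : ℝ) - (rmod u i j k : ℝ)) / (latLen u i j : ℝ))
          + (t j : ℝ) / (latLen u i j : ℝ)) • toR (u j) := by
  funext x
  simp only [Pi.add_apply, Finset.sum_apply, Pi.smul_apply, smul_eq_mul]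
  rw [← Finset.sum_erase_add Finset.univ _ (Finset.mem_univ i)]
  have h1 : ∀ j ∈ Finset.univ.erase i,
      μ j * dilVert u i k j x + (t j : ℝ) * primVec u i j x
      = (μ j * (rmod u i j k : ℝ) / (latLen u i j : ℝ) - (t j : ℝ) / (latLen u i j : ℝ)) * toR (u i) x
        + (μ j * (((latLen u i j : ℝ) - (rmod u i j k : ℝ)) / (latLen u i j : ℝ))
          + (t j : ℝ) / (latLen u i j : ℝ)) * toR (u j) x := by
    intro j hj
    have hji : j ≠ i := Finset.ne_of_mem_erase hj
    simp only [dilVert, if_neg hji, primVec, Pi.add_apply, Pi.smul_apply, Pi.sub_apply,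
      smul_eq_mul]
    ring
  have h2 : dilVert u i k i x = toR (u i) x := by simp [dilVert]
  rw [add_right_comm, ← Finset.sum_add_distrib, Finset.sum_congr rfl h1, h2,
    Finset.sum_add_distrib, add_mul, Finset.sum_mul]
  ring
lemma sound (u : Fin 5 → Fin 4 → ℤ) (i : Fin 5) (k : ℕ) (t : Fin 5 → ℕ)
    (hl : ∀ j, j ≠ i → 3 ≤ latLen u i j)
    (hc : ∀ j', j' ≠ i →
      (∑ j ∈ Finset.univ.erase i, (t j : ℝ) / (latLen u i j : ℝ)) +
        ((latLen u i j' : ℝ) - (rmod u i j' k : ℝ)) / (latLen u i j' : ℝ) ≤ 1) :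
    dilT u i k t ⊆ lsimplex u := by
  intro y hy
  obtain ⟨z, hz, rfl⟩ := hy
  rw [dil, mem_hull_iff] at hz
  obtain ⟨μ, hμ0, hμ1, rfl⟩ := hz
  rw [lsimplex, mem_hull_iff]
  set S : ℝ := ∑ j ∈ Finset.univ.erase i, (t j : ℝ) / (latLen u i j : ℝ) with hS
  have hlpos : ∀ j, j ≠ i → (0:ℝ) < (latLen u i j : ℝ) := by
    intro j hj
    exact_mod_cast lt_of_lt_of_le (by norm_num) (hl j hj)
  have hrle : ∀ j, (rmod u i j k : ℝ) ≤ (latLen u i j : ℝ) := by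
    intro j; exact_mod_cast Nat.mod_le _ _
  have hmnn : ∀ j, j ≠ i → (0:ℝ) ≤ ((latLen u i j : ℝ) - (rmod u i j k : ℝ)) / (latLen u i j : ℝ) := by
    intro j hj
    exact div_nonneg (by linarith [hrle j]) (le_of_lt (hlpos j hj))
  have hSnn : 0 ≤ S := by
    apply Finset.sum_nonneg
    intro j hj
    exact div_nonneg (Nat.cast_nonneg _) (le_of_lt (hlpos j (Finset.ne_of_mem_erase hj)))
  have hS1 : S ≤ 1 := by
    obtain ⟨j0, hj0⟩ := exists_ne i
    have := hc j0 hj0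
    have := hmnn j0 hj0
    linarith
  refine ⟨fun j => if j = i then
      μ i + ∑ j ∈ Finset.univ.erase i,
        (μ j * (rmod u i j k : ℝ) / (latLen u i j : ℝ) - (t j : ℝ) / (latLen u i j : ℝ))
    else μ j * (((latLen u i j : ℝ) - (rmod u i j k : ℝ)) / (latLen u i j : ℝ))
          + (t j : ℝ) / (latLen u i j : ℝ), ?_, ?_, ?_⟩
  · intro j
    by_cases hj : j = i
    · simp only [if_pos hj]
      -- show the i-coefficient is nonnegative
      have key : ∀ j ∈ Finset.univ.erase i,
          μ j * (rmod u i j k : ℝ) / (latLen u i j : ℝ) - (t j : ℝ) / (latLen u i j : ℝ)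
          = μ j - (μ j * (((latLen u i j : ℝ) - (rmod u i j k : ℝ)) / (latLen u i j : ℝ))
              + (t j : ℝ) / (latLen u i j : ℝ)) := by
        intro j hj'
        have h0 : (latLen u i j : ℝ) ≠ 0 := ne_of_gt (hlpos j (Finset.ne_of_mem_erase hj'))
        field_simp
        ring
      rw [Finset.sum_congr rfl key, Finset.sum_sub_distrib, Finset.sum_add_distrib]
      have hterm : ∀ j ∈ Finset.univ.erase i,
          μ j * (((latLen u i j : ℝ) - (rmod u i j k : ℝ)) / (latLen u i j : ℝ)) ≤ μ j * (1 - S) := by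
        intro j hj'
        have hji := Finset.ne_of_mem_erase hj'
        exact mul_le_mul_of_nonneg_left (by linarith [hc j hji]) (hμ0 j)
      have h2 : ∑ j ∈ Finset.univ.erase i,
          μ j * (((latLen u i j : ℝ) - (rmod u i j k : ℝ)) / (latLen u i j : ℝ))
          ≤ ∑ j ∈ Finset.univ.erase i, μ j * (1 - S) := Finset.sum_le_sum hterm
      have h3 : ∑ j ∈ Finset.univ.erase i, μ j * (1 - S)
          = (∑ j ∈ Finset.univ.erase i, μ j) * (1 - S) := by rw [Finset.sum_mul]
      have h4 : (∑ j ∈ Finset.univ.erase i, μ j) + μ i = 1 :=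
        by rw [Finset.sum_erase_add Finset.univ μ (Finset.mem_univ i)]; exact hμ1
      have h5 : (∑ j ∈ Finset.univ.erase i, μ j) * (1 - S) ≤ 1 * (1 - S) := by
        apply mul_le_mul_of_nonneg_right _ (by linarith)
        linarith [hμ0 i]
      linarith
    · simp only [if_neg hj]
      have h1 := mul_nonneg (hμ0 j) (hmnn j hj)
      have h2 : (0:ℝ) ≤ (t j : ℝ) / (latLen u i j : ℝ) :=
        div_nonneg (Nat.cast_nonneg _) (le_of_lt (hlpos j hj))
      linarith
  · rw [← Finset.sum_erase_add Finset.univ _ (Finset.mem_univ i), if_pos rfl]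
    have key : ∀ j ∈ Finset.univ.erase i,
        (if j = i then
          μ i + ∑ j ∈ Finset.univ.erase i,
            (μ j * (rmod u i j k : ℝ) / (latLen u i j : ℝ) - (t j : ℝ) / (latLen u i j : ℝ))
        else μ j * (((latLen u i j : ℝ) - (rmod u i j k : ℝ)) / (latLen u i j : ℝ))
          + (t j : ℝ) / (latLen u i j : ℝ))
        = μ j - (μ j * (rmod u i j k : ℝ) / (latLen u i j : ℝ) - (t j : ℝ) / (latLen u i j : ℝ)) := by
      intro j hj'
      have hji := Finset.ne_of_mem_erase hj'
      rw [if_neg hji]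
      have h0 : (latLen u i j : ℝ) ≠ 0 := ne_of_gt (hlpos j hji)
      field_simp
      ring
    rw [Finset.sum_congr rfl key, Finset.sum_sub_distrib]
    have h4 : (∑ j ∈ Finset.univ.erase i, μ j) + μ i = 1 :=
      by rw [Finset.sum_erase_add Finset.univ μ (Finset.mem_univ i)]; exact hμ1
    ring_nf
    linarith [h4]
  · refine Eq.symm ?_
    show (∑ j, μ j • dilVert u i k j) + (∑ j ∈ Finset.univ.erase i, (t j : ℝ) • primVec u i j) = _
    rw [key_identity u i k t μ]
    rw [← Finset.sum_erase_add Finset.univ _ (Finset.mem_univ i)]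
    beta_reduce
    rw [if_pos rfl]
    have key : ∀ j ∈ Finset.univ.erase i,
        (if j = i then
          μ i + ∑ j ∈ Finset.univ.erase i,
            (μ j * (rmod u i j k : ℝ) / (latLen u i j : ℝ) - (t j : ℝ) / (latLen u i j : ℝ))
        else μ j * (((latLen u i j : ℝ) - (rmod u i j k : ℝ)) / (latLen u i j : ℝ))
          + (t j : ℝ) / (latLen u i j : ℝ)) • toR (u j)
        = (μ j * (((latLen u i j : ℝ) - (rmod u i j k : ℝ)) / (latLen u i j : ℝ))
          + (t j : ℝ) / (latLen u i j : ℝ)) • toR (u j) := by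
      intro j hj'
      rw [if_neg (Finset.ne_of_mem_erase hj')]
    rw [Finset.sum_congr rfl key]
    exact (add_comm _ _)
set_option maxHeartbeats 2000000 in
lemma recipe (l : Fin 5 → ℕ) (i : Fin 5) (hl : ∀ j, j ≠ i → 3 ≤ l j) (h5 : ∀ j, j ≠ i → l j ≠ 5)
    (lam : Fin 5 → ℝ) (h0 : ∀ j, 0 ≤ lam j) (h1 : ∑ j, lam j = 1) (hmax : ∀ j, lam j ≤ lam i) :
    ∃ (k : ℕ) (t : Fin 5 → ℕ),
      k ≤ 4 ∧ (∀ j, t j ≤ 1) ∧ 3 ≤ k ∧ (∀ j, j ≠ i → k ≤ l j) ∧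
      (∀ j, j ≠ i → (t j : ℝ) ≤ lam j * (l j : ℝ)) ∧
      (∑ j ∈ Finset.univ.erase i,
        (lam j * (l j : ℝ) - (t j : ℝ)) / ((l j : ℝ) - ((l j % k : ℕ) : ℝ))) ≤ 1 ∧
      (∀ j', j' ≠ i → (∑ j ∈ Finset.univ.erase i, (t j : ℝ) / (l j : ℝ))
          + ((l j' : ℝ) - ((l j' % k : ℕ) : ℝ)) / (l j' : ℝ) ≤ 1) := by
  classical
  set e := Finset.univ.erase i with he
  have hie : ∀ j ∈ e, j ≠ i := fun j hj => Finset.ne_of_mem_erase hj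
  have hei : ∀ j, j ≠ i → j ∈ e := fun j hj => Finset.mem_erase_of_ne_of_mem hj (Finset.mem_univ j)
  have hecard : e.card = 4 := by
    rw [he, Finset.card_erase_of_mem (Finset.mem_univ i), Finset.card_univ, Fintype.card_fin]
  have hse : ∑ j ∈ e, lam j = 1 - lam i := by
    have h := Finset.sum_erase_add Finset.univ lam (Finset.mem_univ i)
    rw [h1] at h
    linarith
  have hs5 : 1/5 ≤ lam i := by
    have h := Finset.sum_le_card_nsmul Finset.univ lam (lam i) (fun j _ => hmax j)
    rw [h1, Finset.card_univ, Fintype.card_fin, nsmul_eq_mul] at h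
    push_cast at h
    linarith
  -- basic cast facts
  have hLpos : ∀ j ∈ e, (0:ℝ) < (l j : ℝ) := by
    intro j hj
    have := hl j (hie j hj)
    exact_mod_cast lt_of_lt_of_le (by norm_num) this
  have hM3 : ∀ j ∈ e, (3:ℝ) ≤ (l j : ℝ) - ((l j % 3 : ℕ) : ℝ) := by
    intro j hj
    have h := hl j (hie j hj)
    have h3 : 3 ≤ l j - l j % 3 := by omega
    have h4 : (3:ℝ) ≤ ((l j - l j % 3 : ℕ) : ℝ) := by exact_mod_cast h3
    rwa [Nat.cast_sub (Nat.mod_le _ _)] at h4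
  have hM3pos : ∀ j ∈ e, (0:ℝ) < (l j : ℝ) - ((l j % 3 : ℕ) : ℝ) := by
    intro j hj; linarith [hM3 j hj]
  have hR3nn : ∀ j : Fin 5, (0:ℝ) ≤ ((l j % 3 : ℕ) : ℝ) := fun j => Nat.cast_nonneg _
  have hR3le2 : ∀ j : Fin 5, ((l j % 3 : ℕ) : ℝ) ≤ 2 := by
    intro j
    have : l j % 3 ≤ 2 := by omega
    exact_mod_cast this
  have hrho13 : ∀ j ∈ e, ((l j % 3 : ℕ) : ℝ) / ((l j : ℝ) - ((l j % 3 : ℕ) : ℝ)) ≤ 1/3 := by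
    intro j hj
    rw [div_le_iff₀ (hM3pos j hj)]
    have h := hl j (hie j hj)
    have h5' := h5 j (hie j hj)
    have hn : 3 * (l j % 3) ≤ l j - l j % 3 := by omega
    have hn' : (3:ℝ) * ((l j % 3 : ℕ) : ℝ) ≤ ((l j - l j % 3 : ℕ) : ℝ) := by exact_mod_cast hn
    rw [Nat.cast_sub (Nat.mod_le _ _)] at hn'
    linarith
  have hrhonn : ∀ j ∈ e, (0:ℝ) ≤ ((l j % 3 : ℕ) : ℝ) / ((l j : ℝ) - ((l j % 3 : ℕ) : ℝ)) :=
    fun j hj => div_nonneg (hR3nn j) (le_of_lt (hM3pos j hj))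
  by_cases hb1 : (1:ℝ)/4 ≤ lam i
  · -- Branch 1 : k = 3, t = 0
    refine ⟨3, fun _ => 0, by norm_num, fun _ => by norm_num, le_refl 3, fun j hj => hl j hj,
      fun j hj => ?_, ?_, fun j' hj' => ?_⟩
    · simp only [Nat.cast_zero]
      exact mul_nonneg (h0 j) (le_of_lt (hLpos j (hei j hj)))
    · have hterm : ∀ j ∈ e, (lam j * (l j : ℝ) - ((0:ℕ) : ℝ)) / ((l j : ℝ) - ((l j % 3 : ℕ) : ℝ))
          ≤ lam j * (4/3) := by
        intro j hj
        rw [Nat.cast_zero, sub_zero, div_le_iff₀ (hM3pos j hj)]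
        have h := hl j (hie j hj)
        have h5' := h5 j (hie j hj)
        have hn : 3 * l j ≤ 4 * (l j - l j % 3) := by omega
        have hn' : (3:ℝ) * (l j : ℝ) ≤ 4 * ((l j - l j % 3 : ℕ) : ℝ) := by exact_mod_cast hn
        rw [Nat.cast_sub (Nat.mod_le _ _)] at hn'
        nlinarith [h0 j]
      calc ∑ j ∈ e, (lam j * (l j : ℝ) - ((0:ℕ) : ℝ)) / ((l j : ℝ) - ((l j % 3 : ℕ) : ℝ))
          ≤ ∑ j ∈ e, lam j * (4/3) := Finset.sum_le_sum hterm
        _ = (∑ j ∈ e, lam j) * (4/3) := by rw [Finset.sum_mul]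
        _ = (1 - lam i) * (4/3) := by rw [hse]
        _ ≤ 1 := by linarith
    · have h1' : ∑ j ∈ e, ((0:ℕ) : ℝ) / (l j : ℝ) = 0 := by simp
      rw [h1', zero_add, div_le_one (hLpos j' (hei j' hj'))]
      linarith [hR3nn j']
  · -- Branch 2 : lam i < 1/4
    push_neg at hb1
    have heps : ∀ j ∈ e, 1 - 4 * lam i ≤ lam j := by
      intro j hj
      have hsub : ∑ x ∈ e.erase j, lam x ≤ 3 * lam i := by
        have hc : (e.erase j).card = 3 := by
          rw [Finset.card_erase_of_mem hj, hecard]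
        have h := Finset.sum_le_card_nsmul (e.erase j) lam (lam i) (fun x _ => hmax x)
        rw [hc, nsmul_eq_mul] at h
        push_cast at h
        linarith
      have h := Finset.sum_erase_add e lam hj
      rw [hse] at h
      linarith
    set B := e.filter (fun j => l j ≠ 4 ∧ l j ≠ 8) with hB
    have hBe : B ⊆ e := Finset.filter_subset _ _
    have hBl : ∀ j ∈ B, l j ≠ 4 ∧ l j ≠ 8 := fun j hj => (Finset.mem_filter.1 hj).2
    have hnotB : ∀ j ∈ e, j ∉ B → l j = 4 ∨ l j = 8 := by
      intro j hj hjB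
      by_contra hc
      push_neg at hc
      exact hjB (Finset.mem_filter.2 ⟨hj, hc⟩)
    -- the quantity SC
    set SC := ∑ j ∈ B, ((1:ℝ)/3 - ((l j % 3 : ℕ) : ℝ) / ((l j : ℝ) - ((l j % 3 : ℕ) : ℝ))) with hSC
    have hcnn : ∀ j ∈ e, (0:ℝ) ≤ 1/3 - ((l j % 3 : ℕ) : ℝ) / ((l j : ℝ) - ((l j % 3 : ℕ) : ℝ)) := by
      intro j hj; linarith [hrho13 j hj]
    have hSCnn : 0 ≤ SC := Finset.sum_nonneg (fun j hj => hcnn j (hBe hj))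
    -- lower bound for the penalty sum
    have hU : (1 - 4 * lam i) * SC
        ≤ ∑ j ∈ e, lam j * (1/3 - ((l j % 3 : ℕ) : ℝ) / ((l j : ℝ) - ((l j % 3 : ℕ) : ℝ))) := by
      rw [hSC, Finset.mul_sum]
      apply le_trans (Finset.sum_le_sum (g := fun j => lam j *
        (1/3 - ((l j % 3 : ℕ) : ℝ) / ((l j : ℝ) - ((l j % 3 : ℕ) : ℝ)))) ?_)
      · exact Finset.sum_le_sum_of_subset_of_nonneg hBe
          (fun j hj hjB => mul_nonneg (h0 j) (hcnn j hj))
      · intro j hj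
        exact mul_le_mul_of_nonneg_right (heps j (hBe hj)) (hcnn j (hBe hj))
    have hTid : ∑ j ∈ e, lam j * (((l j % 3 : ℕ) : ℝ) / ((l j : ℝ) - ((l j % 3 : ℕ) : ℝ)))
        = (1 - lam i)/3
          - ∑ j ∈ e, lam j * (1/3 - ((l j % 3 : ℕ) : ℝ) / ((l j : ℝ) - ((l j % 3 : ℕ) : ℝ))) := by
      rw [← hse, Finset.sum_div, ← Finset.sum_sub_distrib]
      exact Finset.sum_congr rfl fun j hj => by ring
    -- sum decomposition for (iii) with k = 3
    have hsplit3 : ∀ (t : Fin 5 → ℕ),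
        ∑ j ∈ e, (lam j * (l j : ℝ) - (t j : ℝ)) / ((l j : ℝ) - ((l j % 3 : ℕ) : ℝ))
        = (1 - lam i)
          + ∑ j ∈ e, lam j * (((l j % 3 : ℕ) : ℝ) / ((l j : ℝ) - ((l j % 3 : ℕ) : ℝ)))
          - ∑ j ∈ e, (t j : ℝ) / ((l j : ℝ) - ((l j % 3 : ℕ) : ℝ)) := by
      intro t
      have h' : ∀ j ∈ e, (lam j * (l j : ℝ) - (t j : ℝ)) / ((l j : ℝ) - ((l j % 3 : ℕ) : ℝ))
          = (lam j + lam j * (((l j % 3 : ℕ) : ℝ) / ((l j : ℝ) - ((l j % 3 : ℕ) : ℝ))))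
            - (t j : ℝ) / ((l j : ℝ) - ((l j % 3 : ℕ) : ℝ)) := by
        intro j hj
        have hm := ne_of_gt (hM3pos j hj)
        field_simp
        ring
      rw [Finset.sum_congr rfl h', Finset.sum_sub_distrib, Finset.sum_add_distrib, hse]
    -- pair analysis helper, proved below when needed
    by_cases hb2 : (1:ℝ)/3 ≤ SC
    · -- Branch 2a : k = 3, t = 0
      refine ⟨3, fun _ => 0, by norm_num, fun _ => by norm_num, le_refl 3, fun j hj => hl j hj,
        fun j hj => ?_, ?_, fun j' hj' => ?_⟩
      · simp only [Nat.cast_zero]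
        exact mul_nonneg (h0 j) (le_of_lt (hLpos j (hei j hj)))
      · rw [hsplit3 (fun _ => 0)]
        have hz : ∑ j ∈ e, (((0:ℕ)):ℝ) / ((l j : ℝ) - ((l j % 3 : ℕ) : ℝ)) = 0 := by simp
        rw [hz]
        have hT : ∑ j ∈ e, lam j * (((l j % 3 : ℕ) : ℝ) / ((l j : ℝ) - ((l j % 3 : ℕ) : ℝ)))
            ≤ lam i := by
          rw [hTid]
          have h2 : (1 - 4 * lam i) * (1/3) ≤ (1 - 4 * lam i) * SC :=
            mul_le_mul_of_nonneg_left hb2 (by linarith)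
          linarith [hU]
        linarith
      · have hz : ∑ j ∈ e, (((0:ℕ)):ℝ) / (l j : ℝ) = 0 := by simp
        rw [hz, zero_add, div_le_one (hLpos j' (hei j' hj'))]
        linarith [hR3nn j']
    · -- Branch 2b : SC < 1/3
      push_neg at hb2
      have hrB1 : ∀ j ∈ B, 1 ≤ l j % 3 := by
        intro j hj
        by_contra hc
        push_neg at hc
        have h0' : l j % 3 = 0 := by omega
        have hz : ((l j % 3 : ℕ) : ℝ) = 0 := by rw [h0']; norm_num
        have hcj : (1:ℝ)/3 - ((l j % 3 : ℕ) : ℝ) / ((l j : ℝ) - ((l j % 3 : ℕ) : ℝ)) = 1/3 := by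
          rw [hz, zero_div, sub_zero]
        have hle : (1:ℝ)/3 - ((l j % 3 : ℕ) : ℝ) / ((l j : ℝ) - ((l j % 3 : ℕ) : ℝ)) ≤ SC :=
          Finset.single_le_sum (fun x hx => hcnn x (hBe hx)) hj
        rw [hcj] at hle
        linarith
      have hB7 : ∀ j ∈ B, 7 ≤ l j := by
        intro j hj
        have ha := hl j (hie j (hBe hj))
        have hb := h5 j (hie j (hBe hj))
        have hc := hBl j hj
        have hd := hrB1 j hj
        omega
      have hc9 : ∀ j ∈ B, (1:ℝ)/9 ≤ 1/3 - ((l j % 3 : ℕ) : ℝ) / ((l j : ℝ) - ((l j % 3 : ℕ) : ℝ)) := by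
        intro j hj
        have hm := hM3pos j (hBe hj)
        have ha := hl j (hie j (hBe hj))
        have hb := h5 j (hie j (hBe hj))
        have hc := hBl j hj
        have hn : 9 * (l j % 3) ≤ 2 * (l j - l j % 3) := by omega
        have hn' : (9:ℝ) * ((l j % 3 : ℕ) : ℝ) ≤ 2 * ((l j - l j % 3 : ℕ) : ℝ) := by exact_mod_cast hn
        rw [Nat.cast_sub (Nat.mod_le _ _)] at hn'
        have : ((l j % 3 : ℕ) : ℝ) / ((l j : ℝ) - ((l j % 3 : ℕ) : ℝ)) ≤ 2/9 := by
          rw [div_le_iff₀ hm]; linarith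
        linarith
      have hpairkey : ∀ p ∈ B, ∀ q ∈ B, p ≠ q →
          (l p = 7 ∨ l p = 11 ∨ l p = 14 ∨ l p = 17) ∧
          (l q = 7 ∨ l q = 11 ∨ l q = 14 ∨ l q = 17) ∧ (l p = 11 ∨ l q = 11) := by
        intro p hp q hq hne
        have hmp := hM3pos p (hBe hp)
        have hmq := hM3pos q (hBe hq)
        have hsub : ({p, q} : Finset (Fin 5)) ⊆ B := by
          intro x hx
          rcases Finset.mem_insert.1 hx with h | h
          · exact h ▸ hp
          · exact (Finset.mem_singleton.1 h) ▸ hq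
        have hsumpq : (1/3 - ((l p % 3 : ℕ) : ℝ) / ((l p : ℝ) - ((l p % 3 : ℕ) : ℝ)))
            + (1/3 - ((l q % 3 : ℕ) : ℝ) / ((l q : ℝ) - ((l q % 3 : ℕ) : ℝ))) ≤ SC := by
          have h := Finset.sum_le_sum_of_subset_of_nonneg hsub (fun x hx _ => hcnn x (hBe hx))
          rwa [Finset.sum_pair hne] at h
        have key : ∀ r ∈ B, (1/3 - ((l r % 3 : ℕ) : ℝ) / ((l r : ℝ) - ((l r % 3 : ℕ) : ℝ))) < 2/9 →
            (l r = 7 ∨ l r = 11 ∨ l r = 14 ∨ l r = 17) := by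
          intro r hr hcr
          have hmr := hM3pos r (hBe hr)
          have hnr : ¬ (9 * (l r % 3) ≤ l r - l r % 3) := by
            intro hcon
            have hcon' : (9:ℝ) * ((l r % 3 : ℕ) : ℝ) ≤ ((l r - l r % 3 : ℕ) : ℝ) := by
              exact_mod_cast hcon
            rw [Nat.cast_sub (Nat.mod_le _ _)] at hcon'
            have : ((l r % 3 : ℕ) : ℝ) / ((l r : ℝ) - ((l r % 3 : ℕ) : ℝ)) ≤ 1/9 := by
              rw [div_le_iff₀ hmr]; linarith
            linarith
          have ha := hl r (hie r (hBe hr))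
          have hb := h5 r (hie r (hBe hr))
          have hc := hBl r hr
          omega
        have hep : l p = 7 ∨ l p = 11 ∨ l p = 14 ∨ l p = 17 := by
          apply key p hp
          have := hc9 q hq
          linarith
        have heq : l q = 7 ∨ l q = 11 ∨ l q = 14 ∨ l q = 17 := by
          apply key q hq
          have := hc9 p hp
          linarith
        refine ⟨hep, heq, ?_⟩
        by_cases hp11 : l p = 11
        · exact Or.inl hp11
        · right
          by_contra hq11
          have hsix : ∀ r ∈ B, (l r = 7 ∨ l r = 11 ∨ l r = 14 ∨ l r = 17) → l r ≠ 11 →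
              (1:ℝ)/6 ≤ 1/3 - ((l r % 3 : ℕ) : ℝ) / ((l r : ℝ) - ((l r % 3 : ℕ) : ℝ)) := by
            intro r hr henr hne11
            have hmr := hM3pos r (hBe hr)
            have hn : 6 * (l r % 3) ≤ l r - l r % 3 := by omega
            have hn' : (6:ℝ) * ((l r % 3 : ℕ) : ℝ) ≤ ((l r - l r % 3 : ℕ) : ℝ) := by exact_mod_cast hn
            rw [Nat.cast_sub (Nat.mod_le _ _)] at hn'
            have : ((l r % 3 : ℕ) : ℝ) / ((l r : ℝ) - ((l r % 3 : ℕ) : ℝ)) ≤ 1/6 := by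
              rw [div_le_iff₀ hmr]; linarith
            linarith
          have h6p := hsix p hp hep hp11
          have h6q := hsix q hq heq hq11
          linarith
      by_cases hw : ∃ w ∈ B, (1:ℝ) ≤ lam w * (l w : ℝ)
      · -- Branch 2b-i : k = 3, t = e_w
        obtain ⟨w, hwB, hw1⟩ := hw
        have hwe := hBe hwB
        have hwi := hie w hwe
        have hw7 := hB7 w hwB
        have hwr1 := hrB1 w hwB
        have hmw := hM3pos w hwe
        have hLw := hLpos w hwe
        refine ⟨3, fun j => if j = w then 1 else 0, by norm_num,
          fun j => by by_cases h : j = w <;> simp [h], le_refl 3, fun j hj => hl j hj,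
          fun j hj => ?_, ?_, fun j' hj' => ?_⟩
        · by_cases hjw : j = w
          · subst hjw; simpa using hw1
          · simp only [if_neg hjw, Nat.cast_zero]
            exact mul_nonneg (h0 j) (le_of_lt (hLpos j (hei j hj)))
        · rw [hsplit3]
          have hts : ∑ j ∈ e, (((if j = w then (1:ℕ) else 0) : ℕ) : ℝ)
              / ((l j : ℝ) - ((l j % 3 : ℕ) : ℝ))
              = 1 / ((l w : ℝ) - ((l w % 3 : ℕ) : ℝ)) := by
            have hcg : ∀ j ∈ e, (((if j = w then (1:ℕ) else 0) : ℕ) : ℝ)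
                / ((l j : ℝ) - ((l j % 3 : ℕ) : ℝ))
                = if j = w then 1 / ((l j : ℝ) - ((l j % 3 : ℕ) : ℝ)) else 0 := by
              intro j hj
              by_cases h : j = w
              · rw [if_pos h, if_pos h]; norm_num
              · rw [if_neg h, if_neg h]; norm_num
            rw [Finset.sum_congr rfl hcg, Finset.sum_ite_eq' e w
              (fun j => 1 / ((l j : ℝ) - ((l j % 3 : ℕ) : ℝ))), if_pos hwe]
          rw [hts]
          -- need : T ≤ lam i + 1/M3w
          have hcw : (1/3 - ((l w % 3 : ℕ) : ℝ) / ((l w : ℝ) - ((l w % 3 : ℕ) : ℝ))) ≤ SC :=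
            Finset.single_le_sum (fun x hx => hcnn x (hBe hx)) hwB
          have hSClb : (1 - 4 * lam i) * (1/3 - ((l w % 3 : ℕ) : ℝ)
              / ((l w : ℝ) - ((l w % 3 : ℕ) : ℝ))) ≤ (1 - 4 * lam i) * SC :=
            mul_le_mul_of_nonneg_left hcw (by linarith)
          have hprod : (1 - 4 * lam i) * (((l w % 3 : ℕ) : ℝ)
              / ((l w : ℝ) - ((l w % 3 : ℕ) : ℝ)))
              ≤ 1 / ((l w : ℝ) - ((l w % 3 : ℕ) : ℝ)) := by
            have hnum : (1 - 4 * lam i) * ((l w % 3 : ℕ) : ℝ) ≤ 1 := by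
              nlinarith [hR3le2 w, hR3nn w]
            rw [← mul_div_assoc]
            exact (div_le_div_iff_of_pos_right hmw).2 hnum
          have hT : ∑ j ∈ e, lam j * (((l j % 3 : ℕ) : ℝ) / ((l j : ℝ) - ((l j % 3 : ℕ) : ℝ)))
              ≤ lam i + 1 / ((l w : ℝ) - ((l w % 3 : ℕ) : ℝ)) := by
            rw [hTid]
            linarith [hU, hSClb, hprod]
          linarith
        · -- condition (iv) for t = e_w
          have hLj' := hLpos j' (hei j' hj')
          have htl : ∑ j ∈ e, (((if j = w then (1:ℕ) else 0) : ℕ) : ℝ) / (l j : ℝ)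
              = 1 / (l w : ℝ) := by
            have hcg : ∀ j ∈ e, (((if j = w then (1:ℕ) else 0) : ℕ) : ℝ) / (l j : ℝ)
                = if j = w then 1 / (l j : ℝ) else 0 := by
              intro j hj
              by_cases h : j = w
              · rw [if_pos h, if_pos h]; norm_num
              · rw [if_neg h, if_neg h]; norm_num
            rw [Finset.sum_congr rfl hcg, Finset.sum_ite_eq' e w
              (fun j => 1 / (l j : ℝ)), if_pos hwe]
          rw [htl]
          have hnat : l j' ≤ (l j' % 3) * l w := by
            by_cases hj'B : j' ∈ B
            · by_cases hj'w : j' = w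
              · subst hj'w
                calc l j' = 1 * l j' := (one_mul _).symm
                  _ ≤ (l j' % 3) * l j' := Nat.mul_le_mul_right _ (hrB1 j' hj'B)
              · have hk := hpairkey w hwB j' hj'B (fun h => hj'w h.symm)
                by_cases hw11 : l w = 11
                · rcases hk.2.1 with h | h | h | h <;> rw [h, hw11] <;> omega
                · have hj'11 : l j' = 11 := hk.2.2.resolve_left hw11
                  rw [hj'11]
                  omega
            · rcases hnotB j' (hei j' hj') hj'B with h | h <;> rw [h] <;> omega
          have hnat' : (l j' : ℝ) ≤ ((l j' % 3 : ℕ) : ℝ) * (l w : ℝ) := by exact_mod_cast hnat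
          have hkey : 1 / (l w : ℝ) ≤ ((l j' % 3 : ℕ) : ℝ) / (l j' : ℝ) := by
            rw [div_le_div_iff₀ hLw hLj']
            linarith
          have hident : ((l j' : ℝ) - ((l j' % 3 : ℕ) : ℝ)) / (l j' : ℝ)
              = 1 - ((l j' % 3 : ℕ) : ℝ) / (l j' : ℝ) := by
            field_simp
          rw [hident]
          linarith
      · -- Branch 2b-ii : no big coordinate in B
        push_neg at hw
        -- B.card ≤ 2
        have hcardB : B.card ≤ 2 := by
          by_contra hcon
          push_neg at hcon
          have h3 : (3:ℝ) * (1/9) ≤ SC := by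
            have h := Finset.card_nsmul_le_sum B _ (1/9 : ℝ) (fun x hx => hc9 x hx)
            rw [nsmul_eq_mul] at h
            have : (3:ℝ) ≤ (B.card : ℝ) := by exact_mod_cast hcon
            nlinarith [hSCnn]
          linarith
        by_cases hc2 : B.card ≤ 1
        · -- k = 4, t = 0
          have hle4 : ∀ j ∈ e, 4 ≤ l j := by
            intro j hj
            by_cases hjB : j ∈ B
            · have := hB7 j hjB; omega
            · rcases hnotB j hj hjB with h | h <;> omega
          have hM4pos : ∀ j ∈ e, (0:ℝ) < (l j : ℝ) - ((l j % 4 : ℕ) : ℝ) := by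
            intro j hj
            have h4 : 4 ≤ l j - l j % 4 := by
              have := hle4 j hj
              by_cases hjB : j ∈ B
              · have := hB7 j hjB; omega
              · rcases hnotB j hj hjB with h | h <;> omega
            have h4' : (4:ℝ) ≤ ((l j - l j % 4 : ℕ) : ℝ) := by exact_mod_cast h4
            rw [Nat.cast_sub (Nat.mod_le _ _)] at h4'
            linarith
          refine ⟨4, fun _ => 0, by norm_num, fun _ => by norm_num, by norm_num,
            fun j hj => hle4 j (hei j hj),
            fun j hj => ?_, ?_, fun j' hj' => ?_⟩
          · simp only [Nat.cast_zero]
            exact mul_nonneg (h0 j) (le_of_lt (hLpos j (hei j hj)))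
          · have hterm : ∀ j ∈ e, (lam j * (l j : ℝ) - ((0:ℕ):ℝ))
                / ((l j : ℝ) - ((l j % 4 : ℕ) : ℝ))
                ≤ lam j + (if j ∈ B then (3:ℝ)/28 else 0) := by
              intro j hj
              rw [Nat.cast_zero, sub_zero]
              by_cases hjB : j ∈ B
              · rw [if_pos hjB, div_le_iff₀ (hM4pos j hj)]
                have h7 : (7:ℝ) ≤ (l j : ℝ) := by exact_mod_cast hB7 j hjB
                have hlamL := hw j hjB
                have hm4a : 4 ≤ l j - l j % 4 := by have := hB7 j hjB; omega
                have hm4a' : (4:ℝ) ≤ ((l j - l j % 4 : ℕ) : ℝ) := by exact_mod_cast hm4a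
                rw [Nat.cast_sub (Nat.mod_le _ _)] at hm4a'
                have hm4b : l j - 3 ≤ l j - l j % 4 := by omega
                have hm4b' : ((l j : ℝ) - 3) ≤ ((l j - l j % 4 : ℕ) : ℝ) := by
                  have : ((l j - 3 : ℕ) : ℝ) ≤ ((l j - l j % 4 : ℕ) : ℝ) := by exact_mod_cast hm4b
                  rw [Nat.cast_sub (by omega : 3 ≤ l j)] at this
                  exact_mod_cast this
                rw [Nat.cast_sub (Nat.mod_le _ _)] at hm4b'
                have hlam17 : lam j * 7 < 1 := by nlinarith [h0 j]
                nlinarith [h0 j, mul_nonneg (h0 j) (by linarith : (0:ℝ) ≤ (l j : ℝ) - ((l j % 4 : ℕ) : ℝ) - ((l j:ℝ) - 3))]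
              · rw [if_neg hjB, add_zero]
                rcases hnotB j hj hjB with h | h <;>
                · have hmod : l j % 4 = 0 := by rw [h]
                  rw [hmod]
                  simp only [Nat.cast_zero, sub_zero]
                  rw [mul_div_assoc, div_self (ne_of_gt (hLpos j hj)), mul_one]
            calc ∑ j ∈ e, (lam j * (l j : ℝ) - ((0:ℕ):ℝ)) / ((l j : ℝ) - ((l j % 4 : ℕ) : ℝ))
                ≤ ∑ j ∈ e, (lam j + (if j ∈ B then (3:ℝ)/28 else 0)) := Finset.sum_le_sum hterm
              _ = (1 - lam i) + ∑ j ∈ e, (if j ∈ B then (3:ℝ)/28 else 0) := by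
                  rw [Finset.sum_add_distrib, hse]
              _ ≤ (1 - lam i) + 3/28 := by
                  have : ∑ j ∈ e, (if j ∈ B then (3:ℝ)/28 else 0) = (B.card : ℝ) * (3/28) := by
                    rw [Finset.sum_ite_mem, Finset.inter_eq_right.2 hBe, Finset.sum_const,
                      nsmul_eq_mul]
                  rw [this]
                  have : (B.card : ℝ) ≤ 1 := by exact_mod_cast hc2
                  nlinarith
              _ ≤ 1 := by linarith
          · have hz : ∑ j ∈ e, (((0:ℕ)):ℝ) / (l j : ℝ) = 0 := by simp
            rw [hz, zero_add, div_le_one (hLpos j' (hei j' hj'))]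
            have : (0:ℝ) ≤ ((l j' % 4 : ℕ) : ℝ) := Nat.cast_nonneg _
            linarith
        · -- B.card = 2 : contradiction
          exfalso
          have hc2' : B.card = 2 := by omega
          obtain ⟨p, q, hpq, hBpq⟩ := Finset.card_eq_two.1 hc2'
          have hpB : p ∈ B := by rw [hBpq]; exact Finset.mem_insert_self _ _
          have hqB : q ∈ B := by rw [hBpq]; simp
          have hkey := hpairkey p hpB q hqB hpq
          have h7p : (7:ℝ) ≤ (l p : ℝ) := by exact_mod_cast hB7 p hpB
          have h7q : (7:ℝ) ≤ (l q : ℝ) := by exact_mod_cast hB7 q hqB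
          have hlamp := hw p hpB
          have hlamq := hw q hqB
          have hsum11 : lam p + lam q < 1/11 + 1/7 := by
            rcases hkey.2.2 with h11 | h11
            · have hLp : (l p : ℝ) = 11 := by exact_mod_cast h11
              rw [hLp] at hlamp
              have : lam q * 7 < 1 := by nlinarith [h0 q]
              linarith
            · have hLq : (l q : ℝ) = 11 := by exact_mod_cast h11
              rw [hLq] at hlamq
              have : lam p * 7 < 1 := by nlinarith [h0 p]
              linarith
          have hcc : (e \ B).card = 2 := by
            rw [Finset.card_sdiff_of_subset hBe, hecard, hc2']
          have hcompl : ∑ j ∈ e \ B, lam j ≤ 2 * lam i := by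
            have h := Finset.sum_le_card_nsmul (e \ B) lam (lam i) (fun x _ => hmax x)
            rw [hcc, nsmul_eq_mul] at h
            push_cast at h
            linarith
          have hsplitB : ∑ j ∈ e \ B, lam j + ∑ j ∈ B, lam j = ∑ j ∈ e, lam j :=
            Finset.sum_sdiff hBe
          have hsumB : ∑ j ∈ B, lam j = lam p + lam q := by
            rw [hBpq, Finset.sum_pair hpq]
          rw [hsumB, hse] at hsplitB
          linarith

set_option maxHeartbeats 2000000 in
/-- a full-dimensional lattice simplex in `ℝ⁴` with lattice length at least 3
and no edge of lattice length 5 is the union of finitely many translated dilations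
`P_{i,k,t_i}` with `3 ≤ k ≤ min_{j≠i} l_{ij}`, each contained in `P`. -/
theorem dim4_cover_by_translated_dilations
    (u : Fin 5 → Fin 4 → ℤ)
    (hind : AffineIndependent ℝ fun i => toR (u i))
    (hlen : ∀ i j, i ≠ j → 3 ≤ latLen u i j)
    (h5 : ∀ i j, i ≠ j → latLen u i j ≠ 5) :
    ∃ (m : ℕ) (idx : Fin m → Fin 5 × ℕ × (Fin 5 → ℕ)),
      (∀ a, 3 ≤ (idx a).2.1 ∧
        (∀ j, j ≠ (idx a).1 → (idx a).2.1 ≤ latLen u (idx a).1 j) ∧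
        dilT u (idx a).1 (idx a).2.1 (idx a).2.2 ⊆ lsimplex u) ∧
      lsimplex u = ⋃ a, dilT u (idx a).1 (idx a).2.1 (idx a).2.2 := by
  classical
  set dec : Fin 5 × Fin 2 × (Fin 5 → Fin 2) → Fin 5 × ℕ × (Fin 5 → ℕ) :=
    fun a => (a.1, 3 + (a.2.1 : ℕ), fun j => (a.2.2 j : ℕ)) with hdec
  set V : Fin 5 × Fin 2 × (Fin 5 → Fin 2) → Prop := fun a =>
    (∀ j, j ≠ a.1 → 3 + (a.2.1 : ℕ) ≤ latLen u a.1 j) ∧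
    (∀ j', j' ≠ a.1 →
      (∑ j ∈ Finset.univ.erase a.1, ((a.2.2 j : ℕ) : ℝ) / (latLen u a.1 j : ℝ))
        + ((latLen u a.1 j' : ℝ) - ((rmod u a.1 j' (3 + (a.2.1 : ℕ)) : ℕ) : ℝ))
            / (latLen u a.1 j' : ℝ) ≤ 1) with hV
  set F : Finset (Fin 5 × Fin 2 × (Fin 5 → Fin 2)) := Finset.univ.filter V with hF
  refine ⟨F.card, fun a => dec ((F.equivFin.symm a : {x // x ∈ F}) : _), ?_, ?_⟩
  · intro a
    have hxF : ((F.equivFin.symm a : {x // x ∈ F}) : Fin 5 × Fin 2 × (Fin 5 → Fin 2)) ∈ F :=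
      (F.equivFin.symm a).2
    have hVx : V ((F.equivFin.symm a : {x // x ∈ F}) : Fin 5 × Fin 2 × (Fin 5 → Fin 2)) :=
      (Finset.mem_filter.1 hxF).2
    set x := ((F.equivFin.symm a : {x // x ∈ F}) : Fin 5 × Fin 2 × (Fin 5 → Fin 2)) with hx
    refine ⟨Nat.le_add_right 3 _, hVx.1, ?_⟩
    exact sound u x.1 (3 + (x.2.1 : ℕ)) (fun j => (x.2.2 j : ℕ))
      (fun j hj => hlen x.1 j (Ne.symm hj)) hVx.2
  · apply Set.Subset.antisymm
    · -- the covering direction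
      intro y hy
      rw [lsimplex, mem_hull_iff] at hy
      obtain ⟨lam, hlam0, hlam1, hpoint⟩ := hy
      obtain ⟨i, -, hmaxi⟩ := Finset.exists_max_image Finset.univ lam ⟨0, Finset.mem_univ 0⟩
      have hmax : ∀ j, lam j ≤ lam i := fun j => hmaxi j (Finset.mem_univ j)
      obtain ⟨k, t, hk4, ht1, hk3, hkle, hta, htb, htc⟩ := recipe (fun j => latLen u i j) i
        (fun j hj => hlen i j (Ne.symm hj)) (fun j hj => h5 i j (Ne.symm hj)) lam hlam0 hlam1 hmax
      -- positivity of the k-denominators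
      have hLpos : ∀ j, j ≠ i → (0:ℝ) < (latLen u i j : ℝ) := by
        intro j hj
        have := hlen i j (Ne.symm hj)
        exact_mod_cast lt_of_lt_of_le (by norm_num) this
      have hMk : ∀ j, j ≠ i → (0:ℝ) < (latLen u i j : ℝ) - ((latLen u i j % k : ℕ) : ℝ) := by
        intro j hj
        have hkl := hkle j hj
        have hn : latLen u i j % k < latLen u i j := by
          have : latLen u i j % k < k := Nat.mod_lt _ (by omega)
          omega
        have hn' : ((latLen u i j % k : ℕ) : ℝ) < (latLen u i j : ℝ) := by exact_mod_cast hn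
        linarith
      -- the weights for the dilated simplex
      set μ : Fin 5 → ℝ := fun j => if j = i then
          1 - ∑ j' ∈ Finset.univ.erase i, (lam j' * (latLen u i j' : ℝ) - (t j' : ℝ)) /
            ((latLen u i j' : ℝ) - ((latLen u i j' % k : ℕ) : ℝ))
        else (lam j * (latLen u i j : ℝ) - (t j : ℝ)) /
            ((latLen u i j : ℝ) - ((latLen u i j % k : ℕ) : ℝ)) with hμ
      have hμe : ∀ j ∈ Finset.univ.erase i, μ j
          = (lam j * (latLen u i j : ℝ) - (t j : ℝ)) /
            ((latLen u i j : ℝ) - ((latLen u i j % k : ℕ) : ℝ)) := by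
        intro j hj
        rw [hμ]
        simp only [if_neg (Finset.ne_of_mem_erase hj)]
      have hμi : μ i = 1 - ∑ j ∈ Finset.univ.erase i,
          (lam j * (latLen u i j : ℝ) - (t j : ℝ)) /
            ((latLen u i j : ℝ) - ((latLen u i j % k : ℕ) : ℝ)) := by
        rw [hμ]
        beta_reduce
        rw [if_pos rfl]
      have hμ0 : ∀ j, 0 ≤ μ j := by
        intro j
        by_cases hj : j = i
        · rw [hj, hμi]
          linarith [htb]
        · rw [hμ]; simp only [if_neg hj]
          exact div_nonneg (by linarith [hta j hj]) (le_of_lt (hMk j hj))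
      have hμsum_e : ∑ j ∈ Finset.univ.erase i, μ j
          = ∑ j ∈ Finset.univ.erase i, (lam j * (latLen u i j : ℝ) - (t j : ℝ)) /
            ((latLen u i j : ℝ) - ((latLen u i j % k : ℕ) : ℝ)) :=
        Finset.sum_congr rfl hμe
      have hμ1 : ∑ j, μ j = 1 := by
        rw [← Finset.sum_erase_add Finset.univ μ (Finset.mem_univ i), hμsum_e, hμi]
        ring
      -- coefficient computations
      have hrmod : ∀ j, ((rmod u i j k : ℕ) : ℝ) = ((latLen u i j % k : ℕ) : ℝ) := fun j => rfl
      have hcoeffB : ∀ j ∈ Finset.univ.erase i,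
          μ j * (((latLen u i j : ℝ) - ((rmod u i j k : ℕ) : ℝ)) / (latLen u i j : ℝ))
            + (t j : ℝ) / (latLen u i j : ℝ) = lam j := by
        intro j hj
        have hji := Finset.ne_of_mem_erase hj
        rw [hμe j hj, hrmod j]
        have h1 := ne_of_gt (hMk j hji)
        have h2 := ne_of_gt (hLpos j hji)
        field_simp
        try ring
      have hcoeffA : μ i + ∑ j ∈ Finset.univ.erase i,
          (μ j * ((rmod u i j k : ℕ) : ℝ) / (latLen u i j : ℝ)
            - (t j : ℝ) / (latLen u i j : ℝ)) = lam i := by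
        have hterm : ∀ j ∈ Finset.univ.erase i,
            μ j * ((rmod u i j k : ℕ) : ℝ) / (latLen u i j : ℝ)
              - (t j : ℝ) / (latLen u i j : ℝ) = μ j - lam j := by
          intro j hj
          have hji := Finset.ne_of_mem_erase hj
          have hB := hcoeffB j hj
          have h2 := ne_of_gt (hLpos j hji)
          have : μ j * ((rmod u i j k : ℕ) : ℝ) / (latLen u i j : ℝ)
              - (t j : ℝ) / (latLen u i j : ℝ)
              = μ j - (μ j * (((latLen u i j : ℝ) - ((rmod u i j k : ℕ) : ℝ))
                  / (latLen u i j : ℝ)) + (t j : ℝ) / (latLen u i j : ℝ)) := by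
            field_simp
            ring
          rw [this, hB]
        rw [Finset.sum_congr rfl hterm, Finset.sum_sub_distrib]
        have he1 : ∑ j ∈ Finset.univ.erase i, lam j + lam i = 1 := by
          rw [Finset.sum_erase_add Finset.univ lam (Finset.mem_univ i)]; exact hlam1
        have he2 : ∑ j ∈ Finset.univ.erase i, μ j + μ i = 1 := by
          rw [Finset.sum_erase_add Finset.univ μ (Finset.mem_univ i)]; exact hμ1
        linarith
      -- y is in the translated dilation
      have hymem : y ∈ dilT u i k t := by
        refine ⟨∑ j, μ j • dilVert u i k j, ?_, ?_⟩
        · rw [dil, mem_hull_iff]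
          exact ⟨μ, hμ0, hμ1, rfl⟩
        · show (∑ j, μ j • dilVert u i k j)
            + (∑ j ∈ Finset.univ.erase i, (t j : ℝ) • primVec u i j) = y
          rw [key_identity u i k t μ]
          rw [← hpoint, ← Finset.sum_erase_add Finset.univ
            (fun j => lam j • toR (u j)) (Finset.mem_univ i)]
          rw [hcoeffA, Finset.sum_congr rfl
            (fun j hj => by rw [hcoeffB j hj] : ∀ j ∈ Finset.univ.erase i,
              (μ j * (((latLen u i j : ℝ) - ((rmod u i j k : ℕ) : ℝ)) / (latLen u i j : ℝ))
                + (t j : ℝ) / (latLen u i j : ℝ)) • toR (u j) = lam j • toR (u j))]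
          exact add_comm _ _
      -- encode the index
      have hb2 : k - 3 < 2 := by omega
      have htb2 : ∀ j, t j < 2 := fun j => by have := ht1 j; omega
      set xx : Fin 5 × Fin 2 × (Fin 5 → Fin 2) := (i, ⟨k - 3, hb2⟩, fun j => ⟨t j, htb2 j⟩)
        with hxx
      have hdecx : dec xx = (i, k, t) := by
        rw [hdec, hxx]
        refine Prod.ext rfl (Prod.ext ?_ ?_)
        · show 3 + (k - 3) = k
          omega
        · funext j
          rfl
      have hVx : V xx := by
        rw [hV]
        have hk' : 3 + ((⟨k - 3, hb2⟩ : Fin 2) : ℕ) = k := by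
          show 3 + (k - 3) = k
          omega
        constructor
        · intro j hj
          rw [hxx]
          simp only []
          rw [hk']
          exact hkle j hj
        · intro j' hj'
          rw [hxx]
          simp only []
          rw [hk']
          exact htc j' hj'
      have hxxF : xx ∈ F := by
        rw [hF]
        exact Finset.mem_filter.2 ⟨Finset.mem_univ _, hVx⟩
      rw [Set.mem_iUnion]
      refine ⟨F.equivFin ⟨xx, hxxF⟩, ?_⟩
      have happ : (F.equivFin.symm (F.equivFin ⟨xx, hxxF⟩)) = ⟨xx, hxxF⟩ :=
        Equiv.symm_apply_apply _ _
      beta_reduce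
      rw [happ]
      show y ∈ dilT u (dec xx).1 (dec xx).2.1 (dec xx).2.2
      rw [hdecx]
      exact hymem
    · -- each piece is contained
      apply Set.iUnion_subset
      intro a
      have hxF : ((F.equivFin.symm a : {x // x ∈ F}) : Fin 5 × Fin 2 × (Fin 5 → Fin 2)) ∈ F :=
        (F.equivFin.symm a).2
      have hVx : V ((F.equivFin.symm a : {x // x ∈ F}) : Fin 5 × Fin 2 × (Fin 5 → Fin 2)) :=
        (Finset.mem_filter.1 hxF).2
      set x := ((F.equivFin.symm a : {x // x ∈ F}) : Fin 5 × Fin 2 × (Fin 5 → Fin 2)) with hx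
      exact sound u x.1 (3 + (x.2.1 : ℕ)) (fun j => (x.2.2 j : ℕ))
        (fun j hj => hlen x.1 j (Ne.symm hj)) hVx.2
end
end
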